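/- arXiv:2410.07023 — 11 statements merged into one kernel-verified Lean document; each statement's English description precedes it below -/
import Mathlib

section
/- Given agents indexed 1..n with valuations v_1 ≥ v_2 ≥ ... ≥ v_n ≥ 0, budgets B_i ≥ 0, and resource endowments Γ_i ≥ 0, define k* = max{l ∈ [n] : Σ_{i=1}^l B_i/v_i ≤ Σ_{i=l+1}^n Γ_i}. Then the resource distribution x* with x*_i = B_i/v_i for i ≤ k*, x*_{k*+1} = Σ_{i=k*+2}^n Γ_i − Σ_{i=1}^{k*} B_i/v_i, and x*_i = −Γ_i for i ≥ k*+2 maximizes the market liquid welfare MLW(x) = Σ_i (v_i·Γ_i + min{v_i·x_i, B_i}) over all feasible distributions x (i.e., those with Σ_i x_i = 0 and x_i ≥ −Γ_i for all i). -/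
/-!
Price the resource at `t = v_{k+1}`, the valuation of the one agent left partially served.
Each agent's liquid welfare `y ↦ min (v_i y) B_i` is concave, and `t` is a supergradient of it
at `x*_i` on the feasible side: the agents `i ≤ k` are saturated and value the resource at
least `t`, agent `k + 1` is unsaturated by the maximality of `k`, and the agents `i ≥ k + 2`
value it at most `t` and can only gain resource. Summing the supergradient inequalities, the
price terms cancel because `∑ x_i = ∑ x*_i = 0`.
-/

open Finset

section SupergradientBounds

variable {v t B x y : ℝ}

theorem min_mul_le_of_mul_eq (ht : 0 ≤ t) (htv : t ≤ v) (hy : v * y = B) :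
    min (v * x) B ≤ min (v * y) B + t * (x - y) := by
  rw [hy, min_self]
  rcases le_total x y with hxy | hyx
  · nlinarith [min_le_left (v * x) B]
  · nlinarith [min_le_right (v * x) B]

theorem min_mul_le_of_mul_le (hy : v * y ≤ B) :
    min (v * x) B ≤ min (v * y) B + v * (x - y) := by
  rw [min_eq_left hy]
  linarith [min_le_left (v * x) B]

theorem min_mul_le_of_le (hv : 0 ≤ v) (hvt : v ≤ t) (hyx : y ≤ x) :
    min (v * x) B ≤ min (v * y) B + t * (x - y) := by
  have hslope : v * (x - y) ≤ t * (x - y) := mul_le_mul_of_nonneg_right hvt (sub_nonneg.2 hyx)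
  rcases le_total (v * y) B with hy | hy
  · linarith [min_mul_le_of_mul_le (x := x) hy]
  · rw [min_eq_right hy]
    nlinarith [min_le_right (v * x) B, mul_nonneg hv (sub_nonneg.2 hyx)]

end SupergradientBounds

theorem sum_le_sum_of_le_add_mul_sub {ι : Type*} (s : Finset ι) (φ : ι → ℝ → ℝ) (x y : ι → ℝ)
    (t : ℝ) (h : ∀ i ∈ s, φ i (x i) ≤ φ i (y i) + t * (x i - y i))
    (hxy : ∑ i ∈ s, x i = ∑ i ∈ s, y i) :
    ∑ i ∈ s, φ i (x i) ≤ ∑ i ∈ s, φ i (y i) :=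
  calc ∑ i ∈ s, φ i (x i) ≤ ∑ i ∈ s, (φ i (y i) + t * (x i - y i)) := sum_le_sum h
    _ = ∑ i ∈ s, φ i (y i) := by
      rw [sum_add_distrib, ← mul_sum, sum_sub_distrib, hxy, sub_self, mul_zero, add_zero]

theorem sum_Icc_one_eq_add_add {M : Type*} [AddCommMonoid M] (f : ℕ → M) {k n : ℕ} (hk : k < n) :
    ∑ i ∈ Icc 1 n, f i = ∑ i ∈ Icc 1 k, f i + f (k + 1) + ∑ i ∈ Icc (k + 2) n, f i := by
  rw [← zero_add 1, Icc_add_one_left_eq_Ioc, Icc_add_one_left_eq_Ioc, zero_add,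
    show k + 2 = k + 1 + 1 from rfl, Icc_add_one_left_eq_Ioc,
    ← sum_Ioc_consecutive f (Nat.zero_le (k + 1)) hk, sum_Ioc_succ_top (Nat.zero_le k)]

theorem stmt_0_general (n : ℕ) (v B Γ : ℕ → ℝ)
    (hv : ∀ i ∈ Icc 1 n, 0 < v i)
    (hsort : ∀ i ∈ Icc 1 n, ∀ j ∈ Icc 1 n, i ≤ j → v j ≤ v i)
    (k : ℕ)
    (hkmax : ∀ l, 1 ≤ l → l ≤ n →
      (∑ i ∈ Icc 1 l, B i / v i ≤ ∑ i ∈ Icc (l+1) n, Γ i) → l ≤ k)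
    (xs : ℕ → ℝ)
    (hxs1 : ∀ i, 1 ≤ i → i ≤ k → xs i = B i / v i)
    (hxs2 : xs (k+1) = ∑ i ∈ Icc (k+2) n, Γ i - ∑ i ∈ Icc 1 k, B i / v i)
    (hxs3 : ∀ i, k+2 ≤ i → i ≤ n → xs i = -Γ i)
    (x : ℕ → ℝ)
    (hfeas1 : ∑ i ∈ Icc 1 n, x i = 0)
    (hfeas2 : ∀ i ∈ Icc 1 n, -Γ i ≤ x i) :
    ∑ i ∈ Icc 1 n, (v i * Γ i + min (v i * x i) (B i)) ≤
      ∑ i ∈ Icc 1 n, (v i * Γ i + min (v i * xs i) (B i)) := by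
  have mem {i : ℕ} (h1 : 1 ≤ i) (h2 : i ≤ n) : i ∈ Icc 1 n := mem_Icc.2 ⟨h1, h2⟩
  have saturated {i : ℕ} (h1 : 1 ≤ i) (h2 : i ≤ k) (hn : i ≤ n) : v i * xs i = B i := by
    rw [hxs1 i h1 h2, mul_div_cancel₀ _ (hv i (mem h1 hn)).ne']
  rcases le_or_gt n k with hnk | hkn
  · refine sum_le_sum fun i hi => add_le_add_right ?_ _
    obtain ⟨h1, h2⟩ := mem_Icc.1 hi
    rw [saturated h1 (h2.trans hnk) h2, min_self]
    exact min_le_right _ _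
  have hxs_sum : ∑ i ∈ Icc 1 n, xs i = 0 := by
    rw [sum_Icc_one_eq_add_add xs hkn, hxs2,
      sum_congr rfl fun i hi => hxs1 i (mem_Icc.1 hi).1 (mem_Icc.1 hi).2,
      sum_congr rfl fun i hi => hxs3 i (mem_Icc.1 hi).1 (mem_Icc.1 hi).2, sum_neg_distrib]
    ring
  have hv_succ : 0 < v (k + 1) := hv _ (mem (by omega) hkn)
  have unsaturated : v (k + 1) * xs (k + 1) ≤ B (k + 1) := by
    have hnot : ¬ ∑ i ∈ Icc 1 (k + 1), B i / v i ≤ ∑ i ∈ Icc (k + 2) n, Γ i :=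
      fun h => by have := hkmax (k + 1) (by omega) hkn h; omega
    rw [sum_Icc_succ_top (by omega), not_le] at hnot
    rw [mul_comm, ← le_div_iff₀ hv_succ, hxs2]
    linarith
  refine sum_le_sum_of_le_add_mul_sub _ (fun i y => v i * Γ i + min (v i * y) (B i)) x xs
    (v (k + 1)) (fun i hmem => ?_) (hfeas1.trans hxs_sum.symm)
  obtain ⟨h1, h2⟩ := mem_Icc.1 hmem
  rw [add_assoc]
  refine add_le_add_right ?_ _
  rcases lt_trichotomy i (k + 1) with hlt | rfl | hgt
  · exact min_mul_le_of_mul_eq hv_succ.le (hsort i hmem (k + 1) (mem (by omega) hkn) hlt.le)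
      (saturated h1 (by omega) h2)
  · exact min_mul_le_of_mul_le unsaturated
  · exact min_mul_le_of_le (hv i hmem).le (hsort (k + 1) (mem (by omega) hkn) i hmem hgt.le)
      (hxs3 i hgt h2 ▸ hfeas2 i hmem)

/-- Optimal resource distribution (Lemma: Optimal Resource Distribution).
Agents are indexed `1..n` with valuations sorted descending, `k` is the largest
`l ∈ [n]` with `∑_{i=1}^l B_i/v_i ≤ ∑_{i=l+1}^n Γ_i`.  The distribution `xs`
maximizes the market liquid welfare over all feasible distributions. -/
theorem stmt_0 (n : ℕ) (v B Γ : ℕ → ℝ)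
    (hv : ∀ i ∈ Icc 1 n, 0 < v i)
    (hsort : ∀ i ∈ Icc 1 n, ∀ j ∈ Icc 1 n, i ≤ j → v j ≤ v i)
    (hB : ∀ i ∈ Icc 1 n, 0 ≤ B i) (hΓ : ∀ i ∈ Icc 1 n, 0 ≤ Γ i)
    (k : ℕ) (hk1 : 1 ≤ k) (hkn : k ≤ n)
    (hkle : ∑ i ∈ Icc 1 k, B i / v i ≤ ∑ i ∈ Icc (k+1) n, Γ i)
    (hkmax : ∀ l, 1 ≤ l → l ≤ n →
      (∑ i ∈ Icc 1 l, B i / v i ≤ ∑ i ∈ Icc (l+1) n, Γ i) → l ≤ k)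
    (xs : ℕ → ℝ)
    (hxs1 : ∀ i, 1 ≤ i → i ≤ k → xs i = B i / v i)
    (hxs2 : xs (k+1) = ∑ i ∈ Icc (k+2) n, Γ i - ∑ i ∈ Icc 1 k, B i / v i)
    (hxs3 : ∀ i, k+2 ≤ i → i ≤ n → xs i = -Γ i)
    (x : ℕ → ℝ)
    (hfeas1 : ∑ i ∈ Icc 1 n, x i = 0)
    (hfeas2 : ∀ i ∈ Icc 1 n, -Γ i ≤ x i) :
    ∑ i ∈ Icc 1 n, (v i * Γ i + min (v i * x i) (B i)) ≤
      ∑ i ∈ Icc 1 n, (v i * Γ i + min (v i * xs i) (B i)) :=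
  stmt_0_general n v B Γ hv hsort k hkmax xs hxs1 hxs2 hxs3 x hfeas1 hfeas2
end

section
/- For any feasible resource distribution x (with Σ_i x_i = 0, x_i ≥ −Γ_i, and without loss of generality x_i ≤ B_i/v_i for all i), and for the distribution x* defined by x*_i = B_i/v_i for i ≤ k*, x*_{k*+1} = Σ_{i=k*+2}^n Γ_i − Σ_{i=1}^{k*} B_i/v_i, x*_i = −Γ_i for i ≥ k*+2, it holds that Σ_{i=1}^{k*}(v_i − v_{k*+1})x_i − Σ_{i=k*+2}^n (v_{k*+1} − v_i)x_i ≤ Σ_{i=1}^{k*}(v_i − v_{k*+1})x*_i − Σ_{i=k*+2}^n (v_{k*+1} − v_i)x*_i. -/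
open Finset

/-!
When `k < n`, the weights `v i - v (k+1)` (for `i ≤ k`) and `v (k+1) - v i` (for `i ≥ k+2`) are
nonnegative because `v` is sorted, while `x i ≤ B i / v i = xs i` on the first block and
`x i ≥ -Γ i = xs i` on the last one; the inequality then holds termwise. When `k = n` the weights
involve `v (n+1)`, about which nothing is known; instead, the sum of the `Γ`'s beyond `k` is
empty, so `∑ B i / v i ≤ 0 = ∑ x i`; together with `x i ≤ B i / v i` this forces
`x = xs` on `[1, n]`, and both sides coincide.
-/

theorem Finset.eqOn_of_le_of_sum_le {ι M : Type*} [AddCommMonoid M] [PartialOrder M]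
    [IsOrderedCancelAddMonoid M] {s : Finset ι} {f g : ι → M} (hle : ∀ i ∈ s, f i ≤ g i)
    (hsum : ∑ i ∈ s, g i ≤ ∑ i ∈ s, f i) : ∀ i ∈ s, f i = g i :=
  (sum_eq_sum_iff_of_le hle).1 (le_antisymm (sum_le_sum hle) hsum)

theorem stmt_1_general (n : ℕ) (v B Γ : ℕ → ℝ)
    (hsort : ∀ i ∈ Icc 1 n, ∀ j ∈ Icc 1 n, i ≤ j → v j ≤ v i)
    (k : ℕ) (hkn : k ≤ n)
    (hkle : ∑ i ∈ Icc 1 k, B i / v i ≤ ∑ i ∈ Icc (k+1) n, Γ i)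
    (xs : ℕ → ℝ)
    (hxs1 : ∀ i, 1 ≤ i → i ≤ k → xs i = B i / v i)
    (hxs3 : ∀ i, k+2 ≤ i → i ≤ n → xs i = -Γ i)
    (x : ℕ → ℝ)
    (hfeas1 : ∑ i ∈ Icc 1 n, x i = 0)
    (hfeas2 : ∀ i ∈ Icc 1 n, -Γ i ≤ x i)
    (hub : ∀ i ∈ Icc 1 n, x i ≤ B i / v i) :
    ∑ i ∈ Icc 1 k, (v i - v (k+1)) * x i
      - ∑ i ∈ Icc (k+2) n, (v (k+1) - v i) * x i ≤
    ∑ i ∈ Icc 1 k, (v i - v (k+1)) * xs i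
      - ∑ i ∈ Icc (k+2) n, (v (k+1) - v i) * xs i := by
  rcases hkn.lt_or_eq with hlt | rfl
  · have hpivot : k + 1 ∈ Icc 1 n := mem_Icc.2 ⟨by omega, hlt⟩
    refine sub_le_sub (sum_le_sum fun i hi => ?_) (sum_le_sum fun i hi => ?_)
    · obtain ⟨hi1, hik⟩ := mem_Icc.1 hi
      have hin : i ∈ Icc 1 n := mem_Icc.2 ⟨hi1, by omega⟩
      rw [hxs1 i hi1 hik]
      exact mul_le_mul_of_nonneg_left (hub i hin)
        (sub_nonneg.2 (hsort i hin (k + 1) hpivot (by omega)))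
    · obtain ⟨hki, hin⟩ := mem_Icc.1 hi
      rw [hxs3 i hki hin]
      replace hin : i ∈ Icc 1 n := mem_Icc.2 ⟨by omega, hin⟩
      exact mul_le_mul_of_nonneg_left (hfeas2 i hin)
        (sub_nonneg.2 (hsort (k + 1) hpivot i hin (by omega)))
  · have hbudget : ∑ i ∈ Icc 1 k, B i / v i ≤ ∑ i ∈ Icc 1 k, x i := by
      simpa [hfeas1] using hkle
    have hx_eq : ∀ i ∈ Icc 1 k, x i = xs i := fun i hi => by
      obtain ⟨hi1, hik⟩ := mem_Icc.1 hi
      rw [hxs1 i hi1 hik]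
      exact eqOn_of_le_of_sum_le hub hbudget i hi
    have hempty : Icc (k + 2) k = ∅ := Icc_eq_empty (by omega)
    rw [sum_congr rfl fun i hi => by rw [hx_eq i hi], hempty, sum_empty, sum_empty]

/-- Key exchange-argument inequality in the proof of the optimal-distribution lemma:
among feasible distributions with `x i ≤ B i / v i`, the specific `xs` maximizes the
weighted objective
`∑_{i≤k} (v_i − v_{k+1}) x_i − ∑_{i≥k+2} (v_{k+1} − v_i) x_i`. -/
theorem stmt_1 (n : ℕ) (v B Γ : ℕ → ℝ)
    (hv : ∀ i ∈ Icc 1 n, 0 < v i)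
    (hsort : ∀ i ∈ Icc 1 n, ∀ j ∈ Icc 1 n, i ≤ j → v j ≤ v i)
    (hB : ∀ i ∈ Icc 1 n, 0 ≤ B i) (hΓ : ∀ i ∈ Icc 1 n, 0 ≤ Γ i)
    (k : ℕ) (hk1 : 1 ≤ k) (hkn : k ≤ n)
    (hkle : ∑ i ∈ Icc 1 k, B i / v i ≤ ∑ i ∈ Icc (k+1) n, Γ i)
    (hkmax : ∀ l, 1 ≤ l → l ≤ n →
      (∑ i ∈ Icc 1 l, B i / v i ≤ ∑ i ∈ Icc (l+1) n, Γ i) → l ≤ k)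
    (xs : ℕ → ℝ)
    (hxs1 : ∀ i, 1 ≤ i → i ≤ k → xs i = B i / v i)
    (hxs2 : xs (k+1) = ∑ i ∈ Icc (k+2) n, Γ i - ∑ i ∈ Icc 1 k, B i / v i)
    (hxs3 : ∀ i, k+2 ≤ i → i ≤ n → xs i = -Γ i)
    (x : ℕ → ℝ)
    (hfeas1 : ∑ i ∈ Icc 1 n, x i = 0)
    (hfeas2 : ∀ i ∈ Icc 1 n, -Γ i ≤ x i)
    (hub : ∀ i ∈ Icc 1 n, x i ≤ B i / v i) :
    ∑ i ∈ Icc 1 k, (v i - v (k+1)) * x i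
      - ∑ i ∈ Icc (k+2) n, (v (k+1) - v i) * x i ≤
    ∑ i ∈ Icc 1 k, (v i - v (k+1)) * xs i
      - ∑ i ∈ Icc (k+2) n, (v (k+1) - v i) * xs i :=
  stmt_1_general n v B Γ hsort k hkn hkle xs hxs1 hxs3 x hfeas1 hfeas2 hub
end

section
/- In the exchange market with uniform price λ̄ = OPT/(2·Γ̄) where Γ̄ = Σ_i Γ_i and OPT is the optimal market liquid welfare, and with buyers B = {i : v_i ≥ λ̄} and sellers S = {i : v_i < λ̄}: if an equilibrium state (x,p) satisfies x_j = −Γ_j for all sellers j ∈ S and p_i = λ̄·x_i ≤ B_i for all buyers i ∈ B with Σ_i x_i = 0, then MLW(x) = Σ_{i∈B}(v_i·Γ_i + min{v_i·x_i, B_i}) + Σ_{j∈S} v_j·max{0, Γ_j + x_j} ≥ OPT/2. -/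
open Finset

/-! At price `λ̄` each buyer contributes at least `λ̄` times its final holding `Γ_i + x_i`:
it values every unit at `v_i ≥ λ̄` and can afford its purchase `λ̄ x_i ≤ B_i`. Sellers end with
nothing, so the buyers hold the whole supply `Γ̄`, and the welfare is at least `λ̄ Γ̄ = OPT / 2`. -/

lemma mul_add_le_mul_add_min {lam v Γ x b : ℝ} (hv : lam ≤ v) (hΓ : 0 ≤ Γ) (hx : 0 ≤ x)
    (hb : lam * x ≤ b) : lam * (Γ + x) ≤ v * Γ + min (v * x) b := by
  have hΓv : lam * Γ ≤ v * Γ := mul_le_mul_of_nonneg_right hv hΓ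
  have hxv : lam * x ≤ min (v * x) b := le_min (mul_le_mul_of_nonneg_right hv hx) hb
  linarith [mul_add lam Γ x]

section Market

variable {ι : Type*} (s : Finset ι) (v B Γ x : ι → ℝ) (lam : ℝ)

lemma sum_filter_le_add_eq_sum (hsum : ∑ i ∈ s, x i = 0)
    (hsell : ∀ j ∈ s, v j < lam → x j = -Γ j) :
    ∑ i ∈ s with lam ≤ v i, (Γ i + x i) = ∑ i ∈ s, Γ i := by
  rw [sum_filter_of_ne, sum_add_distrib, hsum, add_zero]
  intro i hi hne
  by_contra hlt
  exact hne (by rw [hsell i hi (not_le.mp hlt)]; ring)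

lemma sum_filter_lt_mul_max_eq_zero (hsell : ∀ j ∈ s, v j < lam → x j = -Γ j) :
    ∑ j ∈ s with v j < lam, v j * max 0 (Γ j + x j) = 0 :=
  sum_eq_zero fun j hj => by
    rw [mem_filter] at hj
    simp [hsell j hj.1 hj.2]

theorem mul_sum_le_welfare (hΓ : ∀ i ∈ s, 0 ≤ Γ i) (hsum : ∑ i ∈ s, x i = 0)
    (hsell : ∀ j ∈ s, v j < lam → x j = -Γ j)
    (hbuy : ∀ i ∈ s, lam ≤ v i → 0 ≤ x i ∧ lam * x i ≤ B i) :
    lam * ∑ i ∈ s, Γ i ≤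
      ∑ i ∈ s with lam ≤ v i, (v i * Γ i + min (v i * x i) (B i))
      + ∑ j ∈ s with v j < lam, v j * max 0 (Γ j + x j) := by
  rw [← sum_filter_le_add_eq_sum s v Γ x lam hsum hsell, mul_sum,
    sum_filter_lt_mul_max_eq_zero s v Γ x lam hsell, add_zero]
  refine sum_le_sum fun i hi => ?_
  rw [mem_filter] at hi
  obtain ⟨hx, hb⟩ := hbuy i hi.1 hi.2
  exact mul_add_le_mul_add_min hi.2 (hΓ i hi.1) hx hb

end Market

theorem stmt_2_general (n : ℕ) (v B Γ : ℕ → ℝ)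
    (hΓ : ∀ i ∈ Icc 1 n, 0 ≤ Γ i)
    (Γbar OPT : ℝ) (hΓbar : Γbar = ∑ i ∈ Icc 1 n, Γ i) (hΓpos : 0 < Γbar)
    (lam : ℝ) (hlam : lam = OPT / (2 * Γbar))
    (x p : ℕ → ℝ)
    (hsum : ∑ i ∈ Icc 1 n, x i = 0)
    (hsell : ∀ j ∈ Icc 1 n, v j < lam → x j = -Γ j)
    (hbuy : ∀ i ∈ Icc 1 n, lam ≤ v i → 0 ≤ x i ∧ p i = lam * x i ∧ p i ≤ B i) :
    OPT / 2 ≤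
      ∑ i ∈ (Icc 1 n).filter (fun i => lam ≤ v i),
        (v i * Γ i + min (v i * x i) (B i))
      + ∑ j ∈ (Icc 1 n).filter (fun j => v j < lam),
        v j * max 0 (Γ j + x j) := by
  have hprice : lam * Γbar = OPT / 2 := by
    rw [hlam]
    field_simp
  rw [← hprice, hΓbar]
  refine mul_sum_le_welfare _ v B Γ x lam hΓ hsum hsell fun i hi hvi => ?_
  obtain ⟨hx, hp, hpB⟩ := hbuy i hi hvi
  exact ⟨hx, hp ▸ hpB⟩

/-- Market Approximate Price, first case: with uniform price `λ̄ = OPT/(2Γ̄)`,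
if in the equilibrium every seller sells the entire endowment, then the market
liquid welfare is at least `OPT/2`. -/
theorem stmt_2 (n : ℕ) (v B Γ : ℕ → ℝ)
    (hv : ∀ i ∈ Icc 1 n, 0 < v i)
    (hB : ∀ i ∈ Icc 1 n, 0 ≤ B i) (hΓ : ∀ i ∈ Icc 1 n, 0 ≤ Γ i)
    (Γbar OPT : ℝ) (hΓbar : Γbar = ∑ i ∈ Icc 1 n, Γ i) (hΓpos : 0 < Γbar)
    (hOPT : IsGreatest {w : ℝ | ∃ y : ℕ → ℝ,
      (∑ i ∈ Icc 1 n, y i = 0) ∧ (∀ i ∈ Icc 1 n, -Γ i ≤ y i) ∧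
      w = ∑ i ∈ Icc 1 n, (v i * Γ i + min (v i * y i) (B i))} OPT)
    (lam : ℝ) (hlam : lam = OPT / (2 * Γbar))
    (x p : ℕ → ℝ)
    (hsum : ∑ i ∈ Icc 1 n, x i = 0)
    (hfeas : ∀ i ∈ Icc 1 n, -Γ i ≤ x i)
    (hsell : ∀ j ∈ Icc 1 n, v j < lam → x j = -Γ j)
    (hbuy : ∀ i ∈ Icc 1 n, lam ≤ v i → 0 ≤ x i ∧ p i = lam * x i ∧ p i ≤ B i) :
    OPT / 2 ≤
      ∑ i ∈ (Icc 1 n).filter (fun i => lam ≤ v i),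
        (v i * Γ i + min (v i * x i) (B i))
      + ∑ j ∈ (Icc 1 n).filter (fun j => v j < lam),
        v j * max 0 (Γ j + x j) :=
  stmt_2_general n v B Γ hΓ Γbar OPT hΓbar hΓpos lam hlam x p hsum hsell hbuy
end

section
/- Under uniform price λ̄ = OPT/(2·Γ̄), if an equilibrium state has every buyer i ∈ B = {i : v_i ≥ λ̄} exhausting their budget (x_i = B_i/λ̄), then MLW(x) ≥ Σ_{i∈B}(v_i·Γ_i + B_i) ≥ OPT − Γ̄·λ̄ = OPT/2, using the upper bound OPT ≤ Σ_{i∈B}(v_i·Γ_i + B_i) + Γ̄·λ̄. -/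
/-!
Buyers (`λ̄ ≤ v_i`) who exhaust their budgets at price `λ̄` contribute exactly `v_iΓ_i + B_i`,
and everyone else contributes a nonnegative amount, which gives the first inequality.
For the second, take an optimal allocation `y`: buyers contribute at most `v_iΓ_i + B_i`, and a
seller at most `v_i(Γ_i + y_i) ≤ λ̄(Γ_i + y_i)`; summed over all agents the latter is `λ̄Γ̄`
because `∑ y_i = 0`. Finally `Γ̄λ̄ = OPT/2` by the choice of `λ̄`.
-/

open Finset

/-- One agent's summand in the market liquid welfare `MLW`. -/
def liquidValue (v Γ B x : ℝ) : ℝ := v * Γ + min (v * x) B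

section liquidValue

variable {v Γ B x lam : ℝ}

theorem liquidValue_budget_exhausted (hlam : 0 < lam) (hv : lam ≤ v) (hB : 0 ≤ B) :
    liquidValue v Γ B (B / lam) = v * Γ + B := by
  have hBle : B ≤ v * (B / lam) :=
    calc B = lam * (B / lam) := by field_simp
      _ ≤ v * (B / lam) := by gcongr
  rw [liquidValue, min_eq_right hBle]

theorem liquidValue_nonneg (hv : 0 ≤ v) (hΓ : 0 ≤ Γ) (hB : 0 ≤ B) (hx : -Γ ≤ x) :
    0 ≤ liquidValue v Γ B x := by
  have hvx : 0 ≤ v * (Γ + x) := mul_nonneg hv (by linarith)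
  have hvΓ : 0 ≤ v * Γ := mul_nonneg hv hΓ
  rw [liquidValue, ← min_add_add_left]
  exact le_min (by linarith) (by linarith)

theorem liquidValue_le_budget : liquidValue v Γ B x ≤ v * Γ + B :=
  add_le_add_right (min_le_right _ _) _

theorem liquidValue_le_price_mul (hv : v ≤ lam) (hx : -Γ ≤ x) :
    liquidValue v Γ B x ≤ lam * (Γ + x) :=
  calc liquidValue v Γ B x ≤ v * Γ + v * x := add_le_add_right (min_le_left _ _) _
    _ = v * (Γ + x) := by ring
    _ ≤ lam * (Γ + x) := by gcongr; linarith

end liquidValue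

section market

variable {ι : Type*} (s : Finset ι) (v Γ B : ι → ℝ) (lam : ℝ)

theorem sum_buyers_le_sum_liquidValue (hlam : 0 < lam) (hv : ∀ i ∈ s, 0 ≤ v i)
    (hΓ : ∀ i ∈ s, 0 ≤ Γ i) (hB : ∀ i ∈ s, 0 ≤ B i) {x : ι → ℝ}
    (hx : ∀ i ∈ s, -Γ i ≤ x i) (hbuy : ∀ i ∈ s, lam ≤ v i → x i = B i / lam) :
    ∑ i ∈ s.filter (fun i => lam ≤ v i), (v i * Γ i + B i) ≤
      ∑ i ∈ s, liquidValue (v i) (Γ i) (B i) (x i) :=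
  calc ∑ i ∈ s.filter (fun i => lam ≤ v i), (v i * Γ i + B i)
      = ∑ i ∈ s.filter (fun i => lam ≤ v i), liquidValue (v i) (Γ i) (B i) (x i) := by
        refine sum_congr rfl fun i hi => ?_
        obtain ⟨hi, hvi⟩ := mem_filter.mp hi
        rw [hbuy i hi hvi, liquidValue_budget_exhausted hlam hvi (hB i hi)]
    _ ≤ ∑ i ∈ s, liquidValue (v i) (Γ i) (B i) (x i) :=
        sum_le_sum_of_subset_of_nonneg (filter_subset _ _) fun i hi _ =>
          liquidValue_nonneg (hv i hi) (hΓ i hi) (hB i hi) (hx i hi)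

theorem sum_liquidValue_le_sum_buyers_add (hlam : 0 ≤ lam) {y : ι → ℝ}
    (hy0 : ∑ i ∈ s, y i = 0) (hy : ∀ i ∈ s, -Γ i ≤ y i) :
    ∑ i ∈ s, liquidValue (v i) (Γ i) (B i) (y i) ≤
      ∑ i ∈ s.filter (fun i => lam ≤ v i), (v i * Γ i + B i) + (∑ i ∈ s, Γ i) * lam := by
  have hsellers : ∑ i ∈ s.filter (fun i => ¬lam ≤ v i), liquidValue (v i) (Γ i) (B i) (y i)
      ≤ (∑ i ∈ s, Γ i) * lam :=
    calc ∑ i ∈ s.filter (fun i => ¬lam ≤ v i), liquidValue (v i) (Γ i) (B i) (y i)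
        ≤ ∑ i ∈ s.filter (fun i => ¬lam ≤ v i), lam * (Γ i + y i) := by
          refine sum_le_sum fun i hi => ?_
          obtain ⟨hi, hvi⟩ := mem_filter.mp hi
          exact liquidValue_le_price_mul (not_le.mp hvi).le (hy i hi)
      _ ≤ ∑ i ∈ s, lam * (Γ i + y i) :=
          sum_le_sum_of_subset_of_nonneg (filter_subset _ _) fun i hi _ =>
            mul_nonneg hlam (neg_le_iff_add_nonneg'.mp (hy i hi))
      _ = (∑ i ∈ s, Γ i) * lam := by rw [← mul_sum, sum_add_distrib, hy0]; ring
  have hbuyers : ∑ i ∈ s.filter (fun i => lam ≤ v i), liquidValue (v i) (Γ i) (B i) (y i)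
      ≤ ∑ i ∈ s.filter (fun i => lam ≤ v i), (v i * Γ i + B i) :=
    sum_le_sum fun _ _ => liquidValue_le_budget
  rw [← sum_filter_add_sum_filter_not s (fun i => lam ≤ v i)]
  exact add_le_add hbuyers hsellers

end market

theorem stmt_3_general (n : ℕ) (v B Γ : ℕ → ℝ)
    (hv : ∀ i ∈ Icc 1 n, 0 < v i)
    (hB : ∀ i ∈ Icc 1 n, 0 ≤ B i) (hΓ : ∀ i ∈ Icc 1 n, 0 ≤ Γ i)
    (Γbar OPT : ℝ) (hΓbar : Γbar = ∑ i ∈ Icc 1 n, Γ i) (hΓpos : 0 < Γbar)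
    (hOPTpos : 0 < OPT)
    (hOPT : IsGreatest {w : ℝ | ∃ y : ℕ → ℝ,
      (∑ i ∈ Icc 1 n, y i = 0) ∧ (∀ i ∈ Icc 1 n, -Γ i ≤ y i) ∧
      w = ∑ i ∈ Icc 1 n, (v i * Γ i + min (v i * y i) (B i))} OPT)
    (lam : ℝ) (hlam : lam = OPT / (2 * Γbar))
    (x : ℕ → ℝ)
    (hfeas : ∀ i ∈ Icc 1 n, -Γ i ≤ x i)
    (hbuy : ∀ i ∈ Icc 1 n, lam ≤ v i → x i = B i / lam) :
    (∑ i ∈ (Icc 1 n).filter (fun i => lam ≤ v i), (v i * Γ i + B i) ≤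
      ∑ i ∈ Icc 1 n, (v i * Γ i + min (v i * x i) (B i))) ∧
    (OPT - Γbar * lam ≤
      ∑ i ∈ (Icc 1 n).filter (fun i => lam ≤ v i), (v i * Γ i + B i)) ∧
    OPT - Γbar * lam = OPT / 2 := by
  have hlampos : 0 < lam := by rw [hlam]; positivity
  obtain ⟨y, hy0, hyfeas, rfl⟩ := hOPT.1
  refine ⟨sum_buyers_le_sum_liquidValue _ v Γ B lam hlampos (fun i hi => (hv i hi).le)
    hΓ hB hfeas hbuy, ?_, by rw [hlam]; field_simp; ring⟩
  have hopt := sum_liquidValue_le_sum_buyers_add _ v Γ B lam hlampos.le hy0 hyfeas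
  rw [← hΓbar] at hopt
  exact sub_le_iff_le_add.mpr hopt

/-- Market Approximate Price, second case: with uniform price `λ̄ = OPT/(2Γ̄)`,
if every buyer exhausts the budget (`x_i = B_i/λ̄`), then
`MLW(x) ≥ ∑_{i∈B}(v_iΓ_i + B_i) ≥ OPT − Γ̄λ̄ = OPT/2`. -/
theorem stmt_3 (n : ℕ) (v B Γ : ℕ → ℝ)
    (hv : ∀ i ∈ Icc 1 n, 0 < v i)
    (hB : ∀ i ∈ Icc 1 n, 0 ≤ B i) (hΓ : ∀ i ∈ Icc 1 n, 0 ≤ Γ i)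
    (Γbar OPT : ℝ) (hΓbar : Γbar = ∑ i ∈ Icc 1 n, Γ i) (hΓpos : 0 < Γbar)
    (hOPTpos : 0 < OPT)
    (hOPT : IsGreatest {w : ℝ | ∃ y : ℕ → ℝ,
      (∑ i ∈ Icc 1 n, y i = 0) ∧ (∀ i ∈ Icc 1 n, -Γ i ≤ y i) ∧
      w = ∑ i ∈ Icc 1 n, (v i * Γ i + min (v i * y i) (B i))} OPT)
    (lam : ℝ) (hlam : lam = OPT / (2 * Γbar))
    (x : ℕ → ℝ)
    (hsum : ∑ i ∈ Icc 1 n, x i = 0)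
    (hfeas : ∀ i ∈ Icc 1 n, -Γ i ≤ x i)
    (hbuy : ∀ i ∈ Icc 1 n, lam ≤ v i → x i = B i / lam) :
    (∑ i ∈ (Icc 1 n).filter (fun i => lam ≤ v i), (v i * Γ i + B i) ≤
      ∑ i ∈ Icc 1 n, (v i * Γ i + min (v i * x i) (B i))) ∧
    (OPT - Γbar * lam ≤
      ∑ i ∈ (Icc 1 n).filter (fun i => lam ≤ v i), (v i * Γ i + B i)) ∧
    OPT - Γbar * lam = OPT / 2 :=
  stmt_3_general n v B Γ hv hB hΓ Γbar OPT hΓbar hΓpos hOPTpos hOPT lam hlam x hfeas hbuy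
end

section
/- Consider the 3-agent instance: agent 1 with v_1 = (1/2 + ε)/(2ε), B_1 = 1, Γ_1 = 0; agent 2 with v_2 = 1, B_2 = 1, Γ_2 = 0; agent 3 with v_3 = 0, B_3 = 0, Γ_3 = 1, for any ε ∈ (0, 1/2). The optimal market liquid welfare is OPT = 1/(1/2 + ε), while for any uniform price λ > 0 with unconstrained exchange intervals, the worst-case reachable equilibrium has market liquid welfare at most 1. Hence the approximation ratio of any uniform price with intervals [−∞,∞] is at most 1/2 + ε. -/
open Finset

/-- A market state `x` is reachable under a uniform price `lam` with
unconstrained exchange intervals: self-consistent, feasible (resource and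
budget limits), and in equilibrium (all buyers exhaust budgets or all sellers
sell everything). -/
def ReachUniform (n : ℕ) (v B Γ : ℕ → ℝ) (lam : ℝ) (x : ℕ → ℝ) : Prop :=
  (∑ i ∈ Icc 1 n, x i = 0) ∧
  (∀ i ∈ Icc 1 n, -Γ i ≤ x i ∧ lam * x i ≤ B i) ∧
  ((∀ i ∈ Icc 1 n, lam ≤ v i → lam * x i = B i) ∨
   (∀ j ∈ Icc 1 n, v j < lam → x j = -Γ j))

set_option maxHeartbeats 1000000

/-- Lower-bound instance showing `1/2` is the best possible ratio of uniform
pricing with unrestricted intervals: for the 3-agent instance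
`(v₁,B₁,Γ₁) = ((1/2+ε)/(2ε),1,0)`, `(v₂,B₂,Γ₂) = (1,1,0)`,
`(v₃,B₃,Γ₃) = (0,0,1)`, the optimum is `1/(1/2+ε)`, yet for every price `λ > 0`
some reachable equilibrium has welfare at most `1`; hence the ratio is at most
`1/2 + ε`. -/
theorem stmt_4 (ε : ℝ) (hε : 0 < ε) (hε2 : ε < 1/2)
    (v B Γ : ℕ → ℝ)
    (hv1 : v 1 = (1/2 + ε) / (2*ε)) (hB1 : B 1 = 1) (hΓ1 : Γ 1 = 0)
    (hv2 : v 2 = 1) (hB2 : B 2 = 1) (hΓ2 : Γ 2 = 0)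
    (hv3 : v 3 = 0) (hB3 : B 3 = 0) (hΓ3 : Γ 3 = 1)
    (OPT : ℝ)
    (hOPT : IsGreatest {w : ℝ | ∃ y : ℕ → ℝ,
      (∑ i ∈ Icc 1 3, y i = 0) ∧ (∀ i ∈ Icc 1 3, -Γ i ≤ y i) ∧
      w = ∑ i ∈ Icc 1 3, (v i * Γ i + min (v i * y i) (B i))} OPT) :
    OPT = 1 / (1/2 + ε) ∧
    (∀ lam : ℝ, 0 < lam → ∃ x : ℕ → ℝ, ReachUniform 3 v B Γ lam x ∧
      ∑ i ∈ Icc 1 3, (v i * Γ i + min (v i * x i) (B i)) ≤ 1) ∧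
    (1 : ℝ) ≤ (1/2 + ε) * OPT := by
  have hε' : (0:ℝ) < 1/2 + ε := by linarith
  have hε'' : (0:ℝ) < 2*ε := by linarith
  have hsum : ∀ f : ℕ → ℝ, ∑ i ∈ Icc 1 3, f i = f 1 + f 2 + f 3 := by
    intro f
    have : (Icc 1 3 : Finset ℕ) = {1,2,3} := by decide
    rw [this]; simp; ring
  -- upper bound on any feasible welfare
  have hub : ∀ w ∈ {w : ℝ | ∃ y : ℕ → ℝ,
      (∑ i ∈ Icc 1 3, y i = 0) ∧ (∀ i ∈ Icc 1 3, -Γ i ≤ y i) ∧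
      w = ∑ i ∈ Icc 1 3, (v i * Γ i + min (v i * y i) (B i))}, w ≤ 1 / (1/2 + ε) := by
    rintro w ⟨y, hy0, hyge, hw⟩
    rw [hsum] at hy0
    have h1 : (0:ℝ) ≤ y 1 := by
      have := hyge 1 (by decide); rwa [hΓ1, neg_zero] at this
    have h3 : (-1:ℝ) ≤ y 3 := by
      have := hyge 3 (by decide); rwa [hΓ3] at this
    rw [hsum, hv1, hB1, hΓ1, hv2, hB2, hΓ2, hv3, hB3, hΓ3] at hw
    simp only [mul_zero, zero_mul, zero_add, add_zero, one_mul, mul_one, min_self] at hw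
    have hy12 : y 1 + y 2 ≤ 1 := by linarith
    set m1 := min ((1/2 + ε) / (2*ε) * y 1) 1 with hm1
    set m2 := min (y 2) 1 with hm2
    have m1a : m1 * (2*ε) ≤ (1/2 + ε) * y 1 := by
      have h : m1 ≤ (1/2 + ε) / (2*ε) * y 1 := min_le_left _ _
      calc m1 * (2*ε) ≤ ((1/2 + ε) / (2*ε) * y 1) * (2*ε) :=
            mul_le_mul_of_nonneg_right h hε''.le
        _ = (1/2 + ε) * y 1 := by field_simp
    have m1b : m1 ≤ 1 := min_le_right _ _
    have m2a : m2 ≤ y 2 := min_le_left _ _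
    have m2b : m2 ≤ 1 := min_le_right _ _
    rw [hw, le_div_iff₀ hε']
    rcases le_total ((1/2 + ε) * y 1) (2*ε) with hc | hc
    · nlinarith [mul_le_mul_of_nonneg_right m1a hε'.le,
        mul_le_mul_of_nonneg_right (show m2 ≤ 1 - y 1 by linarith)
          (le_of_lt (mul_pos hε'' hε')),
        mul_nonneg (show (0:ℝ) ≤ 2*ε - (1/2 + ε) * y 1 by linarith)
          (show (0:ℝ) ≤ 1/2 - ε by linarith)]
    · have hsum2 : m1 + m2 ≤ 2 - y 1 := by linarith
      nlinarith [mul_le_mul_of_nonneg_right hsum2 hε'.le]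
  -- witness achieving 1/(1/2+ε)
  have hmem : (1 / (1/2 + ε)) ∈ {w : ℝ | ∃ y : ℕ → ℝ,
      (∑ i ∈ Icc 1 3, y i = 0) ∧ (∀ i ∈ Icc 1 3, -Γ i ≤ y i) ∧
      w = ∑ i ∈ Icc 1 3, (v i * Γ i + min (v i * y i) (B i))} := by
    refine ⟨fun i => if i = 1 then 2*ε/(1/2+ε) else if i = 2 then 1 - 2*ε/(1/2+ε) else -1,
      ?_, ?_, ?_⟩
    · rw [hsum]; norm_num
    · intro i hi
      have h1 : (0:ℝ) ≤ 2*ε/(1/2+ε) := by positivity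
      have h2 : 2*ε/(1/2+ε) ≤ 1 := by rw [div_le_one hε']; linarith
      fin_cases hi <;> simp [hΓ1, hΓ2, hΓ3] <;> linarith
    · rw [hsum]; norm_num [hv1, hB1, hΓ1, hv2, hB2, hΓ2, hv3, hB3, hΓ3]
      have e1 : (1/2 + ε) / (2*ε) * (2*ε/(1/2+ε)) = 1 := by
        field_simp
      have h2 : 2*ε/(1/2+ε) ≤ 1 := by rw [div_le_one hε']; linarith
      have h2' : (0:ℝ) ≤ 2*ε/(1/2+ε) := by positivity
      rw [e1]
      rw [min_self, min_eq_left (by linarith : 1 - 2*ε/(1/2+ε) ≤ 1)]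
      field_simp
      ring
  have hOPTval : OPT = 1 / (1/2 + ε) :=
    le_antisymm (hub OPT hOPT.1) (hOPT.2 hmem)
  have hv1gt : (1:ℝ) < v 1 := by
    rw [hv1, lt_div_iff₀ hε'']; linarith
  refine ⟨hOPTval, ?_, ?_⟩
  · -- for every lam > 0 a reachable equilibrium with welfare ≤ 1
    intro lam hlam
    rcases le_or_gt lam 1 with hl1 | hl1
    · -- lam ≤ 1 : x = (0, 1, -1)
      refine ⟨fun i => if i = 1 then 0 else if i = 2 then 1 else -1, ⟨?_, ?_, ?_⟩, ?_⟩
      · rw [hsum]; norm_num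
      · intro i hi
        fin_cases hi <;> norm_num [hΓ1, hB1, hΓ2, hB2, hΓ3, hB3] <;> linarith
      · right
        intro j hj hvj
        fin_cases hj
        · norm_num [hΓ1]
        · rw [hv2] at hvj; linarith
        · norm_num [hΓ3]
      · rw [hsum]; norm_num [hv1, hB1, hΓ1, hv2, hB2, hΓ2, hv3, hB3, hΓ3]
    · have he : lam * (1/lam) = 1 := by field_simp
      rcases le_or_gt lam (v 1) with hlv | hlv
      · -- 1 < lam ≤ v1 : x = (1/lam, 0, -1/lam)
        have hle : 1/lam ≤ 1 := by rw [div_le_one hlam]; linarith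
        have hpos : (0:ℝ) < 1/lam := by positivity
        refine ⟨fun i => if i = 1 then 1/lam else if i = 2 then 0 else -(1/lam),
          ⟨?_, ?_, ?_⟩, ?_⟩
        · rw [hsum]; norm_num
        · intro i hi
          have he2 : lam * lam⁻¹ = 1 := mul_inv_cancel₀ (ne_of_gt hlam)
          have hle' : lam⁻¹ ≤ 1 := by rwa [one_div] at hle
          have hpos' : (0:ℝ) < lam⁻¹ := by positivity
          fin_cases hi <;> norm_num [hΓ1, hB1, hΓ2, hB2, hΓ3, hB3] <;>
            constructor <;> linarith
        · left
          intro i hi hvi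
          have he2 : lam * lam⁻¹ = 1 := mul_inv_cancel₀ (ne_of_gt hlam)
          fin_cases hi
          · norm_num [hB1]
            linarith
          · rw [hv2] at hvi; linarith
          · rw [hv3] at hvi; linarith
        · rw [hsum]
          norm_num [hv1, hB1, hΓ1, hv2, hB2, hΓ2, hv3, hB3, hΓ3]
      · -- lam > v1 : x = 0, buyer condition vacuous
        refine ⟨fun _ => 0, ⟨?_, ?_, ?_⟩, ?_⟩
        · rw [hsum]; norm_num
        · intro i hi
          fin_cases hi <;> norm_num [hΓ1, hB1, hΓ2, hB2, hΓ3, hB3] <;> linarith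
        · left
          intro i hi hvi
          fin_cases hi
          · linarith
          · rw [hv2] at hvi; linarith
          · rw [hv3] at hvi; linarith
        · rw [hsum]; norm_num [hv1, hB1, hΓ1, hv2, hB2, hΓ2, hv3, hB3, hΓ3]
  · rw [hOPTval, mul_one_div, div_self (ne_of_gt hε')]
end

section
/- In the Differential Pricing Mechanism, for every agent i, every v_i ∈ ℝ₊, and every v_{−i} ∈ ℝ₊^{n−1}: (v_i − λ_i)·x_i(v_i) ≥ 0, where λ_i = p_i(v_i)/x_i(v_i) when x_i(v_i) ≠ 0. Equivalently, v_i·x_i(v_i) − p_i(v_i) ≥ 0, where p_i(v_i) = v_i·x_i(v_i) − ∫_{v̂}^{v_i} x_i(z, v_{−i}) dz and v̂ is a zero-crossing point of the monotone function z ↦ x_i(z, v_{−i}). -/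
/-!
The Myerson payment leaves the agent the rent `∫_{v̂}^{v_i} x_i`, and this integral is
nonnegative on either side of `v̂`: to the right it integrates `x_i ≥ 0`, to the left it is
minus the integral of `x_i ≤ 0`.
-/

open Finset

noncomputable def sortedVal (n : ℕ) (v : Fin n → ℝ) (σ : Equiv.Perm (Fin n)) (m : ℕ) : ℝ :=
  if h : m < n then v (σ ⟨m, h⟩) else 0

noncomputable def SB (n : ℕ) (B : Fin n → ℝ) (σ : Equiv.Perm (Fin n)) (k : ℕ) : ℝ :=
  ∑ j : Fin n, if (j : ℕ) < k then B (σ j) else 0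

noncomputable def SG (n : ℕ) (Γ : Fin n → ℝ) (σ : Equiv.Perm (Fin n)) (k : ℕ) : ℝ :=
  ∑ j : Fin n, if k ≤ (j : ℕ) then Γ (σ j) else 0

def IsPartitionPoint (n : ℕ) (v B Γ : Fin n → ℝ) (σ : Equiv.Perm (Fin n)) (k : ℕ) : Prop :=
  1 ≤ k ∧ k ≤ n ∧ SB n B σ k ≤ sortedVal n v σ (k-1) * SG n Γ σ k ∧
    ∀ l, 1 ≤ l → l ≤ n → SB n B σ l ≤ sortedVal n v σ (l-1) * SG n Γ σ l → l ≤ k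

noncomputable def qval (n : ℕ) (v B Γ : Fin n → ℝ) (σ : Equiv.Perm (Fin n)) (k : ℕ) : ℝ :=
  if sortedVal n v σ k * SG n Γ σ k < SB n B σ k then SB n B σ k / SG n Γ σ k
  else sortedVal n v σ k

noncomputable def allocAtPos (n : ℕ) (v B Γ : Fin n → ℝ) (σ : Equiv.Perm (Fin n))
    (k : ℕ) (j : Fin n) : ℝ :=
  if (j : ℕ) < k then B (σ j) / qval n v B Γ σ k
  else if (j : ℕ) = k then SG n Γ σ (k+1) - SB n B σ k / qval n v B Γ σ k
  else -Γ (σ j)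

def DPMAlloc (n : ℕ) (v B Γ : Fin n → ℝ) (x : Fin n → ℝ) : Prop :=
  ∃ σ : Equiv.Perm (Fin n), (∀ a b : Fin n, a ≤ b → v (σ b) ≤ v (σ a)) ∧
    ∃ k : ℕ, IsPartitionPoint n v B Γ σ k ∧
      ∀ a : Fin n, x a = allocAtPos n v B Γ σ k (σ.symm a)

theorem intervalIntegral.integral_nonneg_of_sign_change {f : ℝ → ℝ} {c : ℝ}
    (hneg : ∀ z < c, f z ≤ 0) (hpos : ∀ z, c < z → 0 ≤ f z) (b : ℝ) :
    0 ≤ ∫ z in c..b, f z := by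
  rcases le_total c b with hcb | hbc
  · rw [intervalIntegral.integral_of_le hcb]
    exact MeasureTheory.setIntegral_nonneg measurableSet_Ioc fun z hz => hpos z hz.1
  · have hnonpos : ∫ z in b..c, f z ≤ 0 := by
      rw [intervalIntegral.integral_of_le hbc, MeasureTheory.integral_Ioc_eq_integral_Ioo]
      exact MeasureTheory.setIntegral_nonpos measurableSet_Ioo fun z hz => hneg z hz.2
    rw [intervalIntegral.integral_symm]
    exact neg_nonneg.mpr hnonpos

theorem stmt_6_general (n : ℕ) (v : Fin n → ℝ) (A : Fin n → ℝ → ℝ) (vhat : Fin n → ℝ)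
    (hcross : ∀ (i : Fin n) (δ : ℝ), 0 < δ →
      A i (vhat i - δ) ≤ 0 ∧ 0 ≤ A i (vhat i + δ))
    (p : Fin n → ℝ)
    (hp : ∀ i, p i = v i * A i (v i) - ∫ z in (vhat i)..(v i), A i z) :
    ∀ i : Fin n, 0 ≤ v i * A i (v i) - p i ∧
      (A i (v i) ≠ 0 → 0 ≤ (v i - p i / A i (v i)) * A i (v i)) := by
  intro i
  have hrent : 0 ≤ v i * A i (v i) - p i := by
    rw [hp i, sub_sub_cancel]
    refine intervalIntegral.integral_nonneg_of_sign_change (fun z hz => ?_) (fun z hz => ?_) _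
    · simpa using (hcross i (vhat i - z) (sub_pos.mpr hz)).1
    · simpa using (hcross i (z - vhat i) (sub_pos.mpr hz)).2
  refine ⟨hrent, fun hA0 => ?_⟩
  rwa [sub_mul, div_mul_cancel₀ _ hA0]

/-- In the Differential Pricing Mechanism, `(v_i − λ_i)·x_i(v_i) ≥ 0`; equivalently
`v_i·x_i(v_i) − p_i(v_i) ≥ 0`, with Myerson payment
`p_i(v_i) = v_i·x_i(v_i) − ∫_{v̂}^{v_i} x_i(z, v_{−i}) dz`, where `v̂` is the
zero-crossing point of the allocation curve `z ↦ x_i(z, v_{−i})`. -/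
theorem stmt_6 (n : ℕ) (v B Γ : Fin n → ℝ)
    (hv : ∀ i, 0 ≤ v i) (hB : ∀ i, 0 < B i) (hΓ : ∀ i, 0 ≤ Γ i)
    (A : Fin n → ℝ → ℝ)
    (hA : ∀ (i : Fin n) (z : ℝ), 0 ≤ z → ∃ xfull : Fin n → ℝ,
      DPMAlloc n (Function.update v i z) B Γ xfull ∧ A i z = xfull i)
    (vhat : Fin n → ℝ) (hvhat0 : ∀ i, 0 ≤ vhat i)
    (hcross : ∀ (i : Fin n) (δ : ℝ), 0 < δ →
      A i (vhat i - δ) ≤ 0 ∧ 0 ≤ A i (vhat i + δ))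
    (p : Fin n → ℝ)
    (hp : ∀ i, p i = v i * A i (v i) - ∫ z in (vhat i)..(v i), A i z) :
    ∀ i : Fin n, 0 ≤ v i * A i (v i) - p i ∧
      (A i (v i) ≠ 0 → 0 ≤ (v i - p i / A i (v i)) * A i (v i)) :=
  stmt_6_general n v A vhat hcross p hp
end

section
/- In the Differential Pricing Mechanism, for every agent i: p_i(v_i) ≤ B_i (equivalently λ_i·x_i(v_i) ≤ B_i) and x_i(v_i) ≥ −Γ_i. In particular, for i ≤ k, p_i(v_i) = B_i − ∫_{v̂}^{q} x_i(z, v_{−i}) dz ≤ B_i; and for i = k+1 with x_{k+1} > 0, p_{k+1} ≤ v_{k+1}·x_{k+1} = v_{k+1}·Σ_{i=k+2}^n Γ_i − Σ_{i=1}^k B_i < B_{k+1}. -/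
open Finset

/-!
For every report `z` of agent `i`, the DPM outcome is a market equilibrium at a clearing price,
and clearing prices are unique and monotone in the reports. Hence agent `i` receives `-Γ i`
below the price and `B i / q` above it, where the price no longer moves, so the allocation is
constant there; at the price it lies in `[-Γ i, B i / q]`. The Myerson payment
`v * x v - ∫_{v̂}^{v} x` is therefore nonpositive when `v < v̂`, at most `v * B i / q ≤ B i` when
`v ≤ q`, and equal to `B i - ∫_{v̂}^{q} x ≤ B i` when `q < v`. The last case needs the
allocation curve to be integrable: off the finitely many values of the other agents it is an
explicit measurable function of the monotone clearing price.
-/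

open MeasureTheory Set

section Payment

variable {f : ℝ → ℝ} {b c : ℝ}

theorem mul_sub_integral_nonpos_of_lt (hb : 0 ≤ b) (hbc : b < c) (hf : ∀ z < c, f z ≤ 0) :
    b * f b - ∫ z in c..b, f z ≤ 0 := by
  have hint : ∫ z in b..c, f z ≤ 0 := by
    rw [intervalIntegral.integral_of_le hbc.le, integral_Ioc_eq_integral_Ioo]
    exact setIntegral_nonpos measurableSet_Ioo fun z hz => hf z hz.2
  rw [intervalIntegral.integral_symm]
  linarith [mul_nonpos_of_nonneg_of_nonpos hb (hf b hbc)]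

theorem integral_nonneg_of_nonneg_on_Ioi (hcb : c ≤ b) (hf : ∀ z, c < z → 0 ≤ f z) :
    0 ≤ ∫ z in c..b, f z := by
  rw [intervalIntegral.integral_of_le hcb]
  exact setIntegral_nonneg measurableSet_Ioc fun z hz => hf z hz.1

theorem mul_sub_integral_le_of_eq_const {q K : ℝ} (hqb : q < b) (hK : 0 < K)
    (hfK : ∀ z, q < z → f z = K) (hneg : ∀ z < c, f z ≤ 0) (hpos : ∀ z, c < z → 0 ≤ f z)
    (hint : IntervalIntegrable f volume c q) :
    b * f b - ∫ z in c..b, f z ≤ q * K := by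
  have hcq : c ≤ q := by
    by_contra! hqc
    have := hneg ((q + c) / 2) (by linarith)
    rw [hfK _ (by linarith)] at this
    linarith
  have hconst : ∀ᵐ z ∂volume, z ∈ uIoc q b → f z = K := .of_forall fun z hz =>
    hfK z (by rw [uIoc_of_le hqb.le] at hz; exact hz.1)
  have hint' : IntervalIntegrable f volume q b :=
    (intervalIntegrable_const (c := K)).congr_ae
      ((ae_restrict_iff' measurableSet_uIoc).2 (hconst.mono fun z h hz => (h hz).symm))
  have htop : ∫ z in q..b, f z = (b - q) * K := by
    rw [intervalIntegral.integral_congr_ae hconst, intervalIntegral.integral_const, smul_eq_mul]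
  rw [← intervalIntegral.integral_add_adjacent_intervals hint hint', htop, hfK b hqb]
  linarith [integral_nonneg_of_nonneg_on_Ioi hcq hpos]

end Payment

theorem sum_ite_le_sum_ite {ι M : Type*} [Fintype ι] [AddCommMonoid M] [PartialOrder M]
    [IsOrderedAddMonoid M] {P Q : ι → Prop} [DecidablePred P] [DecidablePred Q] {f : ι → M}
    (hf : ∀ i, 0 ≤ f i) (hPQ : ∀ i, P i → Q i) :
    (∑ i, if P i then f i else 0) ≤ ∑ i, if Q i then f i else 0 := by
  rw [← sum_filter, ← sum_filter]
  exact sum_le_sum_of_subset_of_nonneg (monotone_filter_right _ fun i _ => hPQ i) fun i _ _ => hf i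

section Market

variable {ι : Type*} [Fintype ι] {B Γ u u' x : ι → ℝ} {p p' q : ℝ}

/-- At price `p`, agents valued above `p` spend their budget `B a`, agents valued below `p` sell
their endowment `Γ a`, and agents valued exactly `p` may do either; `p` clears the market when
some such choice balances spending with the value of the goods sold. -/
structure IsClearingPrice (B Γ u : ι → ℝ) (p : ℝ) : Prop where
  pos : 0 < p
  demand_le : (∑ a, if p < u a then B a else 0) ≤ p * ∑ a, if u a ≤ p then Γ a else 0
  supply_le : p * (∑ a, if u a < p then Γ a else 0) ≤ ∑ a, if p ≤ u a then B a else 0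
  supply_pos : 0 < ∑ a, if u a ≤ p then Γ a else 0

theorem IsClearingPrice.mono (hB : ∀ a, 0 ≤ B a) (hΓ : ∀ a, 0 ≤ Γ a) (hu : ∀ a, u a ≤ u' a)
    (h : IsClearingPrice B Γ u p) (h' : IsClearingPrice B Γ u' p') : p ≤ p' := by
  by_contra! hlt
  have hsupply : (∑ a, if u' a ≤ p' then Γ a else 0) ≤ ∑ a, if u a < p then Γ a else 0 :=
    sum_ite_le_sum_ite hΓ fun a ha => ((hu a).trans ha).trans_lt hlt
  have hdemand : (∑ a, if p ≤ u a then B a else 0) ≤ ∑ a, if p' < u' a then B a else 0 :=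
    sum_ite_le_sum_ite hB fun a ha => hlt.trans_le (ha.trans (hu a))
  nlinarith [mul_le_mul_of_nonneg_left hsupply h.pos.le, h.supply_le, h'.demand_le,
    mul_lt_mul_of_pos_right hlt h'.supply_pos]

theorem IsClearingPrice.unique (hB : ∀ a, 0 ≤ B a) (hΓ : ∀ a, 0 ≤ Γ a)
    (h : IsClearingPrice B Γ u p) (h' : IsClearingPrice B Γ u p') : p = p' :=
  (h.mono hB hΓ (fun _ => le_rfl) h').antisymm (h'.mono hB hΓ (fun _ => le_rfl) h)

theorem IsClearingPrice.update [DecidableEq ι] (h : IsClearingPrice B Γ u p) {i : ι} {z : ℝ}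
    (hi : p < u i) (hz : p < z) : IsClearingPrice B Γ (Function.update u i z) p := by
  have hsum_update : ∀ (P : ℝ → Prop) [DecidablePred P] (f : ι → ℝ), (P z ↔ P (u i)) →
      (∑ a, if P (Function.update u i z a) then f a else 0) = ∑ a, if P (u a) then f a else 0 := by
    intro P _ f hP
    refine sum_congr rfl fun a _ => ?_
    rcases eq_or_ne a i with rfl | ha
    · simp [hP]
    · simp [ha]
  obtain ⟨hpos, hdemand, hsupply, hsupply_pos⟩ := h
  refine ⟨hpos, ?_, ?_, ?_⟩
  · rwa [hsum_update (p < ·) B (iff_of_true hz hi),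
      hsum_update (· ≤ p) Γ (iff_of_false hz.not_ge hi.not_ge)]
  · rwa [hsum_update (· < p) Γ (iff_of_false hz.not_gt hi.not_gt),
      hsum_update (p ≤ ·) B (iff_of_true hz.le hi.le)]
  · rwa [hsum_update (· ≤ p) Γ (iff_of_false hz.not_ge hi.not_ge)]

structure IsMarketEquilibrium (B Γ u x : ι → ℝ) (q : ℝ) : Prop where
  isClearingPrice : IsClearingPrice B Γ u q
  apply_eq_div_of_lt : ∀ a, q < u a → x a = B a / q
  apply_eq_neg_of_lt : ∀ a, u a < q → x a = -Γ a
  neg_le_apply : ∀ a, -Γ a ≤ x a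
  apply_le_div : ∀ a, x a ≤ B a / q
  sum_eq_zero : ∑ a, x a = 0

theorem IsMarketEquilibrium.mul_apply_le_of_le (h : IsMarketEquilibrium B Γ u x q) {a : ι}
    (hB : 0 ≤ B a) (hu : 0 ≤ u a) (huq : u a ≤ q) : u a * x a ≤ B a := by
  rcases le_or_gt (x a) 0 with hx | hx
  · linarith [mul_nonpos_of_nonneg_of_nonpos hu hx]
  · calc u a * x a ≤ q * (B a / q) :=
        mul_le_mul huq (h.apply_le_div a) hx.le h.isClearingPrice.pos.le
      _ = B a := mul_div_cancel₀ _ h.isClearingPrice.pos.ne'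

theorem IsMarketEquilibrium.apply_eq_neg_sum [DecidableEq ι] (h : IsMarketEquilibrium B Γ u x q)
    {i : ι} (hne : ∀ a ≠ i, u a ≠ q) :
    x i = -∑ a ∈ univ.erase i, if q < u a then B a / q else -Γ a := by
  have hsplit := add_sum_erase univ x (mem_univ i)
  rw [h.sum_eq_zero] at hsplit
  have hothers : ∑ a ∈ univ.erase i, x a = ∑ a ∈ univ.erase i, if q < u a then B a / q else -Γ a :=
    sum_congr rfl fun a ha => by
      rcases (hne a (ne_of_mem_erase ha)).lt_or_gt with hlt | hgt
      · rw [if_neg hlt.not_gt, h.apply_eq_neg_of_lt a hlt]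
      · rw [if_pos hgt, h.apply_eq_div_of_lt a hgt]
  linarith

end Market

section PartitionPoint

variable {n : ℕ} {u B Γ : Fin n → ℝ} {σ : Equiv.Perm (Fin n)} {k : ℕ}

theorem SB_eq_sum_symm : SB n B σ k = ∑ a, if ((σ.symm a : Fin n) : ℕ) < k then B a else 0 :=
  (Equiv.sum_comp σ.symm _).symm.trans (by simp)

theorem SG_eq_sum_symm : SG n Γ σ k = ∑ a, if k ≤ ((σ.symm a : Fin n) : ℕ) then Γ a else 0 :=
  (Equiv.sum_comp σ.symm _).symm.trans (by simp)

theorem sum_ite_val_eq (c : Fin n → ℝ) (hk : k < n) :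
    (∑ j : Fin n, if (j : ℕ) = k then c j else 0) = c ⟨k, hk⟩ := by
  simp [← Fin.ext_iff (b := ⟨k, hk⟩)]

theorem SB_succ (hk : k < n) : SB n B σ (k + 1) = SB n B σ k + B (σ ⟨k, hk⟩) := by
  rw [← sum_ite_val_eq (fun j => B (σ j)) hk, SB, SB, ← sum_add_distrib]
  refine sum_congr rfl fun j _ => ?_
  split_ifs <;> first | omega | simp

theorem SG_succ (hk : k < n) : SG n Γ σ k = Γ (σ ⟨k, hk⟩) + SG n Γ σ (k + 1) := by
  rw [← sum_ite_val_eq (fun j => Γ (σ j)) hk, SG, SG, ← sum_add_distrib]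
  refine sum_congr rfl fun j _ => ?_
  split_ifs <;> first | omega | simp

theorem apply_le_sortedVal (hσ : Antitone (u ∘ σ)) {m : ℕ} {a : Fin n}
    (h : m ≤ σ.symm a) : u a ≤ sortedVal n u σ m := by
  have hm : m < n := h.trans_lt (σ.symm a).isLt
  rw [sortedVal, dif_pos hm]
  simpa using hσ (show (⟨m, hm⟩ : Fin n) ≤ σ.symm a from h)

theorem sortedVal_le_apply (hσ : Antitone (u ∘ σ)) {m : ℕ} {a : Fin n}
    (h : (σ.symm a : ℕ) ≤ m) (hm : m < n) : sortedVal n u σ m ≤ u a := by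
  rw [sortedVal, dif_pos hm]
  simpa using hσ (show σ.symm a ≤ ⟨m, hm⟩ from h)

theorem sortedVal_eq (hk : k < n) : sortedVal n u σ k = u (σ ⟨k, hk⟩) := dif_pos hk

theorem IsPartitionPoint.SB_pos (hB : ∀ a, 0 < B a) (hpp : IsPartitionPoint n u B Γ σ k) :
    0 < SB n B σ k := by
  have hn : 0 < n := by have := hpp.1; have := hpp.2.1; omega
  have hle := single_le_sum (f := fun j : Fin n => if (j : ℕ) < k then B (σ j) else 0)
    (fun j _ => by split_ifs; exacts [(hB _).le, le_rfl]) (mem_univ ⟨0, hn⟩)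
  simp only [show (0 : ℕ) < k from hpp.1, if_true] at hle
  exact (hB _).trans_le hle

theorem IsPartitionPoint.SG_pos (hB : ∀ a, 0 < B a) (hΓ : ∀ a, 0 ≤ Γ a)
    (hpp : IsPartitionPoint n u B Γ σ k) : 0 < SG n Γ σ k := by
  have hSG : 0 ≤ SG n Γ σ k := sum_nonneg fun j _ => by split_ifs; exacts [hΓ _, le_rfl]
  have hprod := (hpp.SB_pos hB).trans_le hpp.2.2.1
  refine hSG.lt_of_ne fun h => ?_
  rw [← h, mul_zero] at hprod
  exact hprod.false

theorem IsPartitionPoint.lt (hB : ∀ a, 0 < B a) (hΓ : ∀ a, 0 ≤ Γ a)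
    (hpp : IsPartitionPoint n u B Γ σ k) : k < n := by
  by_contra! hnk
  have : SG n Γ σ k = 0 := sum_eq_zero fun j _ => if_neg (by have := j.isLt; omega)
  exact (hpp.SG_pos hB hΓ).ne' this

theorem IsPartitionPoint.qval_pos (hB : ∀ a, 0 < B a) (hΓ : ∀ a, 0 ≤ Γ a)
    (hpp : IsPartitionPoint n u B Γ σ k) : 0 < qval n u B Γ σ k := by
  have hSB := hpp.SB_pos hB
  have hSG := hpp.SG_pos hB hΓ
  unfold qval
  split_ifs with hc
  · exact div_pos hSB hSG
  · exact pos_of_mul_pos_left (hSB.trans_le (not_lt.1 hc)) hSG.le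

theorem IsPartitionPoint.sortedVal_le_qval (hB : ∀ a, 0 < B a) (hΓ : ∀ a, 0 ≤ Γ a)
    (hpp : IsPartitionPoint n u B Γ σ k) : sortedVal n u σ k ≤ qval n u B Γ σ k := by
  unfold qval
  split_ifs with hc
  · exact ((lt_div_iff₀ (hpp.SG_pos hB hΓ)).2 hc).le
  · exact le_rfl

theorem IsPartitionPoint.SB_le_qval_mul (hB : ∀ a, 0 < B a) (hΓ : ∀ a, 0 ≤ Γ a)
    (hpp : IsPartitionPoint n u B Γ σ k) : SB n B σ k ≤ qval n u B Γ σ k * SG n Γ σ k := by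
  unfold qval
  split_ifs with hc
  · rw [div_mul_cancel₀ _ (hpp.SG_pos hB hΓ).ne']
  · exact not_lt.1 hc

theorem IsPartitionPoint.SB_eq_qval_mul (hB : ∀ a, 0 < B a) (hΓ : ∀ a, 0 ≤ Γ a)
    (hpp : IsPartitionPoint n u B Γ σ k) (h : sortedVal n u σ k < qval n u B Γ σ k) :
    SB n B σ k = qval n u B Γ σ k * SG n Γ σ k := by
  unfold qval at h ⊢
  split_ifs at h ⊢ with hc
  · rw [div_mul_cancel₀ _ (hpp.SG_pos hB hΓ).ne']
  · exact absurd h (lt_irrefl _)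

theorem IsPartitionPoint.qval_le_sortedVal_pred (hσ : Antitone (u ∘ σ)) (hB : ∀ a, 0 < B a)
    (hΓ : ∀ a, 0 ≤ Γ a) (hpp : IsPartitionPoint n u B Γ σ k) :
    qval n u B Γ σ k ≤ sortedVal n u σ (k - 1) := by
  have hk := hpp.lt hB hΓ
  unfold qval
  split_ifs with hc
  · exact (div_le_iff₀ (hpp.SG_pos hB hΓ)).2 hpp.2.2.1
  · rw [sortedVal_eq hk]
    exact apply_le_sortedVal hσ (by simp)

/-- The strictness comes from the maximality of the partition point `k`. -/
theorem IsPartitionPoint.qval_mul_SG_succ_lt (hB : ∀ a, 0 < B a) (hΓ : ∀ a, 0 ≤ Γ a)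
    (hpp : IsPartitionPoint n u B Γ σ k) :
    qval n u B Γ σ k * SG n Γ σ (k + 1) < SB n B σ (k + 1) := by
  have hk := hpp.lt hB hΓ
  have hmax : sortedVal n u σ k * SG n Γ σ (k + 1) < SB n B σ (k + 1) := by
    by_contra! h
    have := hpp.2.2.2 (k + 1) (by omega) hk (by simpa using h)
    omega
  rcases (hpp.sortedVal_le_qval hB hΓ).lt_or_eq with hlt | heq
  · have hSB := hpp.SB_eq_qval_mul hB hΓ hlt
    have hSG := SG_succ (Γ := Γ) (σ := σ) hk
    rw [SB_succ hk]
    nlinarith [hΓ (σ ⟨k, hk⟩), hB (σ ⟨k, hk⟩), hpp.qval_pos hB hΓ]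
  · rwa [← heq]

theorem IsPartitionPoint.qval_le_apply (hσ : Antitone (u ∘ σ)) (hB : ∀ a, 0 < B a)
    (hΓ : ∀ a, 0 ≤ Γ a) (hpp : IsPartitionPoint n u B Γ σ k) {a : Fin n}
    (ha : (σ.symm a : ℕ) < k) : qval n u B Γ σ k ≤ u a :=
  (hpp.qval_le_sortedVal_pred hσ hB hΓ).trans
    (sortedVal_le_apply hσ (by omega) (by have := hpp.lt hB hΓ; omega))

theorem IsPartitionPoint.apply_le_qval (hσ : Antitone (u ∘ σ)) (hB : ∀ a, 0 < B a)
    (hΓ : ∀ a, 0 ≤ Γ a) (hpp : IsPartitionPoint n u B Γ σ k) {a : Fin n}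
    (ha : k ≤ σ.symm a) : u a ≤ qval n u B Γ σ k :=
  (apply_le_sortedVal hσ ha).trans (hpp.sortedVal_le_qval hB hΓ)

theorem IsPartitionPoint.isClearingPrice (hσ : Antitone (u ∘ σ)) (hB : ∀ a, 0 < B a)
    (hΓ : ∀ a, 0 ≤ Γ a) (hpp : IsPartitionPoint n u B Γ σ k) :
    IsClearingPrice B Γ u (qval n u B Γ σ k) := by
  set q := qval n u B Γ σ k
  have hk := hpp.lt hB hΓ
  have hB0 : ∀ a, 0 ≤ B a := fun a => (hB a).le
  have hSG_le : SG n Γ σ k ≤ ∑ a, if u a ≤ q then Γ a else 0 := by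
    rw [SG_eq_sum_symm]
    exact sum_ite_le_sum_ite hΓ fun a ha => hpp.apply_le_qval hσ hB hΓ ha
  refine ⟨hpp.qval_pos hB hΓ, ?_, ?_, (hpp.SG_pos hB hΓ).trans_le hSG_le⟩
  · calc (∑ a, if q < u a then B a else 0) ≤ SB n B σ k := by
          rw [SB_eq_sum_symm]
          exact sum_ite_le_sum_ite hB0 fun a ha => by
            by_contra! h
            exact (hpp.apply_le_qval hσ hB hΓ h).not_gt ha
      _ ≤ q * SG n Γ σ k := hpp.SB_le_qval_mul hB hΓ
      _ ≤ _ := by gcongr; exact (hpp.qval_pos hB hΓ).le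
  · have hsv : sortedVal n u σ k ≤ q := hpp.sortedVal_le_qval hB hΓ
    rcases hsv.lt_or_eq with hlt | heq
    · calc q * (∑ a, if u a < q then Γ a else 0) ≤ q * SG n Γ σ k := by
            gcongr
            · exact (hpp.qval_pos hB hΓ).le
            rw [SG_eq_sum_symm]
            exact sum_ite_le_sum_ite hΓ fun a ha => by
              by_contra! h
              exact (hpp.qval_le_apply hσ hB hΓ h).not_gt ha
        _ = SB n B σ k := (hpp.SB_eq_qval_mul hB hΓ hlt).symm
        _ ≤ _ := by
          rw [SB_eq_sum_symm]
          exact sum_ite_le_sum_ite hB0 fun a ha => hpp.qval_le_apply hσ hB hΓ ha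
    · calc q * (∑ a, if u a < q then Γ a else 0) ≤ q * SG n Γ σ (k + 1) := by
            gcongr
            · exact (hpp.qval_pos hB hΓ).le
            rw [SG_eq_sum_symm]
            exact sum_ite_le_sum_ite hΓ fun a ha => by
              by_contra! h
              exact (heq ▸ sortedVal_le_apply hσ (by omega) hk).not_gt ha
        _ ≤ SB n B σ (k + 1) := (hpp.qval_mul_SG_succ_lt hB hΓ).le
        _ ≤ _ := by
          rw [SB_eq_sum_symm]
          exact sum_ite_le_sum_ite hB0 fun a ha => heq ▸ sortedVal_le_apply hσ (by omega) hk

theorem allocAtPos_of_lt {j : Fin n} (hj : (j : ℕ) < k) :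
    allocAtPos n u B Γ σ k j = B (σ j) / qval n u B Γ σ k :=
  if_pos hj

theorem allocAtPos_of_eq {j : Fin n} (hj : (j : ℕ) = k) :
    allocAtPos n u B Γ σ k j = SG n Γ σ (k + 1) - SB n B σ k / qval n u B Γ σ k := by
  rw [allocAtPos, if_neg (by omega), if_pos hj]

theorem allocAtPos_of_gt {j : Fin n} (hj : k < j) : allocAtPos n u B Γ σ k j = -Γ (σ j) := by
  rw [allocAtPos, if_neg (by omega), if_neg (by omega)]

theorem IsPartitionPoint.allocAtPos_mem_Icc (hB : ∀ a, 0 < B a) (hΓ : ∀ a, 0 ≤ Γ a)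
    (hpp : IsPartitionPoint n u B Γ σ k) (j : Fin n) :
    allocAtPos n u B Γ σ k j ∈ Icc (-Γ (σ j)) (B (σ j) / qval n u B Γ σ k) := by
  have hq := hpp.qval_pos hB hΓ
  have hk := hpp.lt hB hΓ
  have hgap : -Γ (σ j) ≤ B (σ j) / qval n u B Γ σ k := by
    linarith [hΓ (σ j), div_pos (hB (σ j)) hq]
  rcases lt_trichotomy (j : ℕ) k with hlt | heq | hgt
  · rw [allocAtPos_of_lt hlt]
    exact ⟨hgap, le_rfl⟩
  · obtain rfl : j = ⟨k, hk⟩ := Fin.ext heq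
    have hlow := hpp.SB_le_qval_mul hB hΓ
    have hup := hpp.qval_mul_SG_succ_lt hB hΓ
    rw [SG_succ hk] at hlow
    rw [SB_succ hk] at hup
    rw [allocAtPos_of_eq heq]
    constructor
    · have : SB n B σ k / qval n u B Γ σ k ≤ Γ (σ ⟨k, hk⟩) + SG n Γ σ (k + 1) := by
        rw [div_le_iff₀ hq]
        linarith
      linarith
    · rw [sub_le_iff_le_add, ← add_div, le_div_iff₀ hq]
      linarith
  · rw [allocAtPos_of_gt hgt]
    exact ⟨le_rfl, hgap⟩

theorem IsPartitionPoint.sum_allocAtPos (hB : ∀ a, 0 < B a) (hΓ : ∀ a, 0 ≤ Γ a)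
    (hpp : IsPartitionPoint n u B Γ σ k) : ∑ j, allocAtPos n u B Γ σ k j = 0 := by
  set q := qval n u B Γ σ k
  have hk := hpp.lt hB hΓ
  have hsplit : ∀ j : Fin n, allocAtPos n u B Γ σ k j =
      (if (j : ℕ) < k then B (σ j) else 0) / q
        + (if (j : ℕ) = k then SG n Γ σ (k + 1) - SB n B σ k / q else 0)
        - (if k + 1 ≤ (j : ℕ) then Γ (σ j) else 0) := by
    intro j
    unfold allocAtPos
    split_ifs <;> first | omega | ring
  rw [sum_congr rfl fun j _ => hsplit j, sum_sub_distrib, sum_add_distrib, ← sum_div,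
    sum_ite_val_eq (fun _ => SG n Γ σ (k + 1) - SB n B σ k / q) hk]
  change SB n B σ k / q + (SG n Γ σ (k + 1) - SB n B σ k / q) - SG n Γ σ (k + 1) = 0
  ring

theorem IsPartitionPoint.isMarketEquilibrium (hσ : Antitone (u ∘ σ)) (hB : ∀ a, 0 < B a)
    (hΓ : ∀ a, 0 ≤ Γ a) (hpp : IsPartitionPoint n u B Γ σ k) :
    IsMarketEquilibrium B Γ u (fun a => allocAtPos n u B Γ σ k (σ.symm a)) (qval n u B Γ σ k) := by
  have hk := hpp.lt hB hΓ
  have hIcc := fun a => σ.apply_symm_apply a ▸ hpp.allocAtPos_mem_Icc hB hΓ (σ.symm a)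
  refine ⟨hpp.isClearingPrice hσ hB hΓ, fun a ha => ?_, fun a ha => ?_, fun a => (hIcc a).1,
    fun a => (hIcc a).2, ?_⟩
  · have hpos : (σ.symm a : ℕ) < k := by
      by_contra! h
      exact (hpp.apply_le_qval hσ hB hΓ h).not_gt ha
    rw [allocAtPos_of_lt hpos, σ.apply_symm_apply]
  · have hpos : k ≤ σ.symm a := by
      by_contra! h
      exact (hpp.qval_le_apply hσ hB hΓ h).not_gt ha
    rcases hpos.eq_or_lt with heq | hgt
    · obtain rfl : a = σ ⟨k, hk⟩ := σ.symm_apply_eq.1 (Fin.ext heq.symm)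
      have hSB := hpp.SB_eq_qval_mul hB hΓ (by rwa [sortedVal_eq hk])
      rw [allocAtPos_of_eq heq.symm, hSB, mul_div_cancel_left₀ _ (hpp.qval_pos hB hΓ).ne',
        SG_succ hk]
      ring
    · rw [allocAtPos_of_gt hgt, σ.apply_symm_apply]
  · exact (Equiv.sum_comp σ.symm _).trans (hpp.sum_allocAtPos hB hΓ)

theorem DPMAlloc.exists_isMarketEquilibrium (hB : ∀ a, 0 < B a) (hΓ : ∀ a, 0 ≤ Γ a)
    {x : Fin n → ℝ} (h : DPMAlloc n u B Γ x) : ∃ q, IsMarketEquilibrium B Γ u x q := by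
  obtain ⟨σ, hσ, k, hpp, hx⟩ := h
  rw [funext hx]
  exact ⟨_, hpp.isMarketEquilibrium (fun a b hab => hσ a b hab) hB hΓ⟩

end PartitionPoint

section EquilibriumCurve

variable {ι : Type*} [Fintype ι] [DecidableEq ι] {B Γ v : ι → ℝ} {i : ι} {f Q : ℝ → ℝ}

def IsEquilibriumCurve (B Γ v : ι → ℝ) (i : ι) (f : ℝ → ℝ) : Prop :=
  ∀ z, 0 ≤ z → ∃ x q, IsMarketEquilibrium B Γ (Function.update v i z) x q ∧ f z = x i

/-- Agent `i`'s equilibrium allocation at report `z`, when `Q z` is the clearing price and no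
other agent has value `z`. -/
noncomputable def allocFormula (B Γ v : ι → ℝ) (i : ι) (Q : ℝ → ℝ) (z : ℝ) : ℝ :=
  if z < Q z then -Γ i
  else if Q z < z then B i / Q z
  else -∑ a ∈ univ.erase i, if z < v a then B a / z else -Γ a

theorem measurable_allocFormula (hQ : Measurable Q) : Measurable (allocFormula B Γ v i Q) := by
  refine .ite (measurableSet_lt measurable_id hQ) measurable_const
    (.ite (measurableSet_lt hQ measurable_id) (measurable_const.div hQ)
      (Finset.measurable_sum _ fun a _ => ?_).neg)
  exact .ite (measurableSet_lt measurable_id measurable_const)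
    (measurable_const.div measurable_id) measurable_const

theorem eq_allocFormula
    (hfQ : ∀ z, 0 ≤ z → ∃ x, IsMarketEquilibrium B Γ (Function.update v i z) x (Q z) ∧ f z = x i)
    {z : ℝ} (hz : 0 ≤ z) (hzv : z ∉ (univ.erase i).image v) : f z = allocFormula B Γ v i Q z := by
  obtain ⟨x, h, hfx⟩ := hfQ z hz
  rw [hfx, allocFormula]
  split_ifs with hlt hgt
  · exact h.apply_eq_neg_of_lt i (by simpa using hlt)
  · exact h.apply_eq_div_of_lt i (by simpa using hgt)
  · have hQz : Q z = z := le_antisymm (not_lt.1 hlt) (not_lt.1 hgt)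
    have hne : ∀ a ≠ i, Function.update v i z a ≠ Q z := fun a ha hva =>
      hzv (mem_image.2 ⟨a, mem_erase.2 ⟨ha, mem_univ a⟩, by simpa [ha, hQz] using hva⟩)
    rw [h.apply_eq_neg_sum hne, hQz]
    congr 1
    exact sum_congr rfl fun a ha => by rw [Function.update_of_ne (ne_of_mem_erase ha)]

theorem IsEquilibriumCurve.eq_div_of_lt (hB : ∀ a, 0 ≤ B a) (hΓ : ∀ a, 0 ≤ Γ a)
    (hf : IsEquilibriumCurve B Γ v i f) {x : ι → ℝ} {q : ℝ}
    (h : IsMarketEquilibrium B Γ v x q) (hi : q < v i) {z : ℝ} (hz : q < z) : f z = B i / q := by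
  obtain ⟨y, q', hy, hfz⟩ := hf z (h.isClearingPrice.pos.trans hz).le
  have hq' : q' = q := hy.isClearingPrice.unique hB hΓ (h.isClearingPrice.update hi hz)
  rw [hfz, hy.apply_eq_div_of_lt i (by simpa [hq'] using hz), hq']

theorem IsEquilibriumCurve.exists_monotone_price (hB : ∀ a, 0 ≤ B a) (hΓ : ∀ a, 0 ≤ Γ a)
    (hf : IsEquilibriumCurve B Γ v i f) :
    ∃ Q : ℝ → ℝ, Monotone Q ∧
      ∀ z, 0 ≤ z → ∃ x, IsMarketEquilibrium B Γ (Function.update v i z) x (Q z) ∧ f z = x i := by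
  -- Reports are clamped at `0` so that the price is defined, and monotone, on all of `ℝ`.
  have hex : ∀ z, ∃ q x, IsMarketEquilibrium B Γ (Function.update v i (max z 0)) x q ∧
      f (max z 0) = x i := fun z => by
    obtain ⟨x, q, h, hfx⟩ := hf (max z 0) (le_max_right _ _)
    exact ⟨q, x, h, hfx⟩
  choose Q x hQ hfx using hex
  refine ⟨Q, fun z z' hzz' => (hQ z).isClearingPrice.mono hB hΓ (fun a => ?_)
    (hQ z').isClearingPrice, fun z hz => ⟨x z, ?_⟩⟩
  · rcases eq_or_ne a i with rfl | ha
    · simpa using max_le_max hzz' le_rfl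
    · simp [ha]
  · simpa only [max_eq_left hz] using And.intro (hQ z) (hfx z)

theorem IsEquilibriumCurve.intervalIntegrable (hB : ∀ a, 0 ≤ B a) (hΓ : ∀ a, 0 ≤ Γ a)
    (hf : IsEquilibriumCurve B Γ v i f) {a b : ℝ}
    (ha : 0 ≤ a) (hb : 0 ≤ b) : IntervalIntegrable f volume a b := by
  obtain ⟨Q, hQ, hfQ⟩ := hf.exists_monotone_price hB hΓ
  have hnonneg : ∀ z ∈ uIoc a b, 0 ≤ z := fun z hz => (le_min ha hb).trans hz.1.le
  have hvals : ∀ᵐ z ∂volume, z ∉ (((univ.erase i).image v : Finset ℝ) : Set ℝ) :=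
    ((univ.erase i).image v).finite_toSet.countable.ae_notMem volume
  have hbound : ∀ z, 0 ≤ z → ‖f z‖ ≤ max (Γ i) (B i / Q 0) := fun z hz => by
    obtain ⟨x, h, hfx⟩ := hfQ z hz
    obtain ⟨x₀, h₀, -⟩ := hfQ 0 le_rfl
    rw [hfx, Real.norm_eq_abs, abs_le]
    constructor
    · linarith [h.neg_le_apply i, le_max_left (Γ i) (B i / Q 0)]
    · calc x i ≤ B i / Q z := h.apply_le_div i
        _ ≤ B i / Q 0 := div_le_div_of_nonneg_left (hB i) h₀.isClearingPrice.pos (hQ hz)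
        _ ≤ _ := le_max_right _ _
  rw [intervalIntegrable_iff]
  refine IntegrableOn.of_bound measure_Ioc_lt_top
    ((measurable_allocFormula (B := B) (Γ := Γ) (v := v) (i := i)
      hQ.measurable).aestronglyMeasurable.congr ?_)
    (max (Γ i) (B i / Q 0)) ?_
  · filter_upwards [ae_restrict_mem measurableSet_uIoc, ae_restrict_of_ae hvals] with z hz hzv
    exact (eq_allocFormula hfQ (hnonneg z hz) hzv).symm
  · filter_upwards [ae_restrict_mem measurableSet_uIoc] with z hz
    exact hbound z (hnonneg z hz)

end EquilibriumCurve

/-- In the Differential Pricing Mechanism, every agent's Myerson payment is within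
budget, `p_i(v_i) ≤ B_i`, and the allocation respects the endowment,
`x_i(v_i) ≥ −Γ_i`. -/
theorem stmt_8 (n : ℕ) (v B Γ : Fin n → ℝ)
    (hv : ∀ i, 0 ≤ v i) (hB : ∀ i, 0 < B i) (hΓ : ∀ i, 0 ≤ Γ i)
    (A : Fin n → ℝ → ℝ)
    (hA : ∀ (i : Fin n) (z : ℝ), 0 ≤ z → ∃ xfull : Fin n → ℝ,
      DPMAlloc n (Function.update v i z) B Γ xfull ∧ A i z = xfull i)
    (vhat : Fin n → ℝ) (hvhat0 : ∀ i, 0 ≤ vhat i)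
    (hcross : ∀ (i : Fin n) (δ : ℝ), 0 < δ →
      A i (vhat i - δ) ≤ 0 ∧ 0 ≤ A i (vhat i + δ))
    (p : Fin n → ℝ)
    (hp : ∀ i, p i = v i * A i (v i) - ∫ z in (vhat i)..(v i), A i z) :
    ∀ i : Fin n, p i ≤ B i ∧ -Γ i ≤ A i (v i) := by
  intro i
  have hB0 : ∀ a, 0 ≤ B a := fun a => (hB a).le
  have hcurve : IsEquilibriumCurve B Γ v i (A i) := fun z hz => by
    obtain ⟨x, hx, hAx⟩ := hA i z hz
    obtain ⟨q, hq⟩ := hx.exists_isMarketEquilibrium hB hΓ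
    exact ⟨x, q, hq, hAx⟩
  obtain ⟨x, q, heq, hAx⟩ := hcurve (v i) (hv i)
  rw [Function.update_eq_self] at heq
  refine ⟨?_, hAx ▸ heq.neg_le_apply i⟩
  have hneg : ∀ z < vhat i, A i z ≤ 0 := fun z hz => by
    simpa using (hcross i (vhat i - z) (by linarith)).1
  have hpos : ∀ z, vhat i < z → 0 ≤ A i z := fun z hz => by
    simpa using (hcross i (z - vhat i) (by linarith)).2
  rw [hp i]
  rcases lt_or_ge (v i) (vhat i) with hlt | hle
  · linarith [mul_sub_integral_nonpos_of_lt (hv i) hlt hneg, hB i]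
  rcases le_or_gt (v i) q with hvq | hqv
  · linarith [integral_nonneg_of_nonneg_on_Ioi hle hpos,
      hAx ▸ heq.mul_apply_le_of_le (hB0 i) (hv i) hvq]
  have hq := heq.isClearingPrice.pos
  calc _ ≤ q * (B i / q) :=
        mul_sub_integral_le_of_eq_const hqv (div_pos (hB i) hq)
          (fun z hz => hcurve.eq_div_of_lt hB0 hΓ heq hqv hz) hneg hpos
          (hcurve.intervalIntegrable hB0 hΓ (hvhat0 i) hq.le)
    _ = B i := mul_div_cancel₀ _ hq.ne'
end

section
/- The Differential Pricing Mechanism is a 1/2-approximation: OPT ≤ 2·MLW(x), where x is the mechanism's allocation. Specifically, OPT ≤ Σ_{i=1}^k (B_i + v_i·Γ_i) + v_{k+1}·Σ_{i=k+1}^n Γ_i, and MLW(x) ≥ max{Σ_{i=1}^k (B_i + v_i·Γ_i), v_{k+1}·Σ_{i=k+1}^n Γ_i}. -/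
/-!
Both bounds compare with the price `p = v_{k+1}`. For any feasible `y`, an agent `i ≤ k`
contributes at most `B_i + v_iΓ_i + p·y_i` and an agent `i > k` at most `p·(Γ_i + y_i)`; summing,
the terms `p·y_i` cancel since `∑ y_i = 0`, which bounds `OPT`. The mechanism spends exactly the
budgets of the first `k` agents at a price `q ∈ [v_{k+1}, v_k]`, so it collects
`∑_{i≤k}(B_i + v_iΓ_i)` from them, and the maximality of `k` forces agent `k + 1` to contribute at
least `v_{k+1}·∑_{i>k} Γ_i` minus what the first `k` agents paid. Adding the two lower bounds
gives `OPT ≤ 2·MLW(x)`.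
-/

open Finset

namespace DifferentialPricing

def agentWelfare (v B Γ y : ℝ) : ℝ := v * Γ + min (v * y) B

def liquidWelfare (n : ℕ) (v B Γ y : ℕ → ℝ) : ℝ :=
  ∑ i ∈ Icc 1 n, agentWelfare (v i) (B i) (Γ i) (y i)

/-- The price `q` of the mechanism, for `a = v_{k+1}`, `S = ∑_{i≤k} B_i`, `T = ∑_{i>k} Γ_i`.
At `T = 0` the quotient is junk; the hypotheses `S ≤ c * T` below exclude that branch. -/
noncomputable def clearingPrice (a S T : ℝ) : ℝ := if a * T < S then S / T else a

theorem sum_Icc_split (f : ℕ → ℝ) {m k n : ℕ} (hmk : m ≤ k + 1) (hkn : k ≤ n) :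
    ∑ i ∈ Icc m n, f i = ∑ i ∈ Icc m k, f i + ∑ i ∈ Icc (k + 1) n, f i := by
  simp only [← Ico_add_one_right_eq_Icc]
  exact (sum_Ico_consecutive f hmk (by omega)).symm

theorem sum_Icc_eq_add_sum_Icc_succ (f : ℕ → ℝ) {m n : ℕ} (hmn : m ≤ n) :
    ∑ i ∈ Icc m n, f i = f m + ∑ i ∈ Icc (m + 1) n, f i := by
  rw [← add_sum_Ioc_eq_sum_Icc hmn, Icc_add_one_left_eq_Ioc]

section Agent

variable {v B Γ y p : ℝ}

theorem agentWelfare_le_budget_add (hB : 0 ≤ B) (hp : 0 ≤ p) (hpv : p ≤ v) :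
    agentWelfare v B Γ y ≤ B + v * Γ + p * y := by
  unfold agentWelfare
  rcases le_total 0 y with hy | hy
  · linarith [min_le_right (v * y) B, mul_nonneg hp hy]
  · linarith [min_le_left (v * y) B, mul_le_mul_of_nonpos_right hpv hy]

theorem agentWelfare_le_price_mul (hvp : v ≤ p) (hy : -Γ ≤ y) :
    agentWelfare v B Γ y ≤ p * (Γ + y) := by
  have := mul_le_mul_of_nonneg_right hvp (by linarith : 0 ≤ Γ + y)
  unfold agentWelfare
  linarith [min_le_left (v * y) B, mul_add v Γ y]

theorem agentWelfare_nonneg (hv : 0 ≤ v) (hB : 0 ≤ B) (hΓ : 0 ≤ Γ) (hy : -Γ ≤ y) :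
    0 ≤ agentWelfare v B Γ y := by
  have := mul_le_mul_of_nonneg_left hy hv
  unfold agentWelfare
  rcases min_choice (v * y) B with h | h <;> rw [h] <;> nlinarith

theorem agentWelfare_neg_self (hv : 0 ≤ v) (hB : 0 ≤ B) (hΓ : 0 ≤ Γ) :
    agentWelfare v B Γ (-Γ) = 0 := by
  unfold agentWelfare
  rw [min_eq_left (by nlinarith)]
  ring

theorem agentWelfare_div (hq : 0 < q) (hqv : q ≤ v) (hB : 0 ≤ B) :
    agentWelfare v B Γ (B / q) = B + v * Γ := by
  have : B ≤ v * (B / q) :=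
    calc B = q * (B / q) := (mul_div_cancel₀ B hq.ne').symm
      _ ≤ v * (B / q) := mul_le_mul_of_nonneg_right hqv (div_nonneg hB hq.le)
  unfold agentWelfare
  rw [min_eq_right this]
  ring

theorem sub_le_agentWelfare {R s S : ℝ} (hs : v * s ≤ S) (hR : v * R ≤ S + B) :
    v * (Γ + R) - S ≤ agentWelfare v B Γ (R - s) := by
  unfold agentWelfare
  have := le_min (by linarith [mul_sub v R s] : v * R - S ≤ v * (R - s))
    (by linarith : v * R - S ≤ B)
  linarith [mul_add v Γ R]

end Agent

section ClearingPrice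

variable {a S T c : ℝ}

theorem pos_of_mul_lt_of_le_mul (hT : 0 ≤ T) (h : a * T < S) (hS : S ≤ c * T) : 0 < T := by
  refine hT.lt_of_ne fun h0 => ?_
  rw [← h0] at h hS
  linarith

theorem clearingPrice_pos (ha : 0 < a) (hT : 0 ≤ T) (hS : S ≤ c * T) :
    0 < clearingPrice a S T := by
  unfold clearingPrice
  split_ifs with h
  · exact div_pos (by nlinarith) (pos_of_mul_lt_of_le_mul hT h hS)
  · exact ha

theorem le_clearingPrice (hT : 0 ≤ T) (hS : S ≤ c * T) : a ≤ clearingPrice a S T := by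
  unfold clearingPrice
  split_ifs with h
  · exact (le_div_iff₀ (pos_of_mul_lt_of_le_mul hT h hS)).2 h.le
  · exact le_rfl

theorem clearingPrice_le (hac : a ≤ c) (hT : 0 ≤ T) (hS : S ≤ c * T) :
    clearingPrice a S T ≤ c := by
  unfold clearingPrice
  split_ifs with h
  · exact (div_le_iff₀ (pos_of_mul_lt_of_le_mul hT h hS)).2 hS
  · exact hac

theorem div_clearingPrice_le (ha : 0 < a) (hT : 0 ≤ T) :
    S / clearingPrice a S T ≤ T := by
  unfold clearingPrice
  split_ifs with h
  · rw [div_div_cancel₀ (by nlinarith)]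
  · rw [div_le_iff₀ ha]
    linarith

end ClearingPrice

variable {n k : ℕ} {v B Γ : ℕ → ℝ}

theorem liquidWelfare_le_of_price {y : ℕ → ℝ} {p : ℝ} (hkn : k ≤ n) (hp : 0 ≤ p)
    (hB : ∀ i ∈ Icc 1 n, 0 ≤ B i) (hhigh : ∀ i ∈ Icc 1 k, p ≤ v i)
    (hlow : ∀ i ∈ Icc (k + 1) n, v i ≤ p)
    (hy0 : ∑ i ∈ Icc 1 n, y i = 0) (hy : ∀ i ∈ Icc 1 n, -Γ i ≤ y i) :
    liquidWelfare n v B Γ y ≤ ∑ i ∈ Icc 1 k, (B i + v i * Γ i) + p * ∑ i ∈ Icc (k + 1) n, Γ i := by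
  have hsub : Icc 1 k ⊆ Icc 1 n := Icc_subset_Icc_right hkn
  have hsub' : Icc (k + 1) n ⊆ Icc 1 n := Icc_subset_Icc_left (by omega)
  calc liquidWelfare n v B Γ y
      = ∑ i ∈ Icc 1 k, agentWelfare (v i) (B i) (Γ i) (y i)
        + ∑ i ∈ Icc (k + 1) n, agentWelfare (v i) (B i) (Γ i) (y i) :=
        sum_Icc_split _ (by omega) hkn
    _ ≤ ∑ i ∈ Icc 1 k, (B i + v i * Γ i + p * y i) + ∑ i ∈ Icc (k + 1) n, p * (Γ i + y i) :=
        add_le_add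
          (sum_le_sum fun i hi => agentWelfare_le_budget_add (hB i (hsub hi)) hp (hhigh i hi))
          (sum_le_sum fun i hi => agentWelfare_le_price_mul (hlow i hi) (hy i (hsub' hi)))
    _ = ∑ i ∈ Icc 1 k, (B i + v i * Γ i) + p * ∑ i ∈ Icc (k + 1) n, Γ i
        + p * ∑ i ∈ Icc 1 n, y i := by
        rw [sum_Icc_split y (by omega) hkn]
        simp only [sum_add_distrib, ← mul_sum, mul_add]
        ring
    _ = _ := by rw [hy0, mul_zero, add_zero]

theorem liquidWelfare_mechanism {x : ℕ → ℝ} {q : ℝ} (hkn : k + 1 ≤ n)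
    (hv : ∀ i ∈ Icc 1 n, 0 ≤ v i) (hB : ∀ i ∈ Icc 1 n, 0 ≤ B i) (hΓ : ∀ i ∈ Icc 1 n, 0 ≤ Γ i)
    (hq : 0 < q) (hqv : ∀ i ∈ Icc 1 k, q ≤ v i)
    (hx1 : ∀ i, 1 ≤ i → i ≤ k → x i = B i / q) (hx3 : ∀ i, k + 2 ≤ i → i ≤ n → x i = -Γ i) :
    liquidWelfare n v B Γ x = ∑ i ∈ Icc 1 k, (B i + v i * Γ i)
      + agentWelfare (v (k + 1)) (B (k + 1)) (Γ (k + 1)) (x (k + 1)) := by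
  have hfirst : ∑ i ∈ Icc 1 k, agentWelfare (v i) (B i) (Γ i) (x i)
      = ∑ i ∈ Icc 1 k, (B i + v i * Γ i) := by
    refine sum_congr rfl fun i hi => ?_
    obtain ⟨hi1, hik⟩ := mem_Icc.1 hi
    rw [hx1 i hi1 hik, agentWelfare_div hq (hqv i hi) (hB i (mem_Icc.2 ⟨hi1, by omega⟩))]
  have hlast : ∑ i ∈ Icc (k + 2) n, agentWelfare (v i) (B i) (Γ i) (x i) = 0 := by
    refine sum_eq_zero fun i hi => ?_
    obtain ⟨hki, hin⟩ := mem_Icc.1 hi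
    have hi : i ∈ Icc 1 n := mem_Icc.2 ⟨by omega, hin⟩
    rw [hx3 i hki hin, agentWelfare_neg_self (hv i hi) (hB i hi) (hΓ i hi)]
  unfold liquidWelfare
  rw [sum_Icc_split _ (by omega) (by omega : k ≤ n), hfirst,
    sum_Icc_eq_add_sum_Icc_succ _ hkn, hlast, add_zero]

theorem le_liquidWelfare_mechanism {x : ℕ → ℝ} {q : ℝ} (hkn : k + 1 ≤ n)
    (hv : ∀ i ∈ Icc 1 n, 0 ≤ v i) (hB : ∀ i ∈ Icc 1 n, 0 ≤ B i) (hΓ : ∀ i ∈ Icc 1 n, 0 ≤ Γ i)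
    (hq : 0 < q) (hqv : ∀ i ∈ Icc 1 k, q ≤ v i) (hvq : v (k + 1) ≤ q)
    (hSq : (∑ i ∈ Icc 1 k, B i) / q ≤ ∑ i ∈ Icc (k + 1) n, Γ i)
    (hR : v (k + 1) * ∑ i ∈ Icc (k + 2) n, Γ i ≤ ∑ i ∈ Icc 1 k, B i + B (k + 1))
    (hx1 : ∀ i, 1 ≤ i → i ≤ k → x i = B i / q)
    (hx2 : x (k + 1) = ∑ i ∈ Icc (k + 2) n, Γ i - (∑ i ∈ Icc 1 k, B i) / q)
    (hx3 : ∀ i, k + 2 ≤ i → i ≤ n → x i = -Γ i) :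
    max (∑ i ∈ Icc 1 k, (B i + v i * Γ i)) (v (k + 1) * ∑ i ∈ Icc (k + 1) n, Γ i)
      ≤ liquidWelfare n v B Γ x := by
  have hlow : ∀ i ∈ Icc 1 k, i ∈ Icc 1 n := fun _ hi => Icc_subset_Icc_right (by omega) hi
  have hk1n : k + 1 ∈ Icc 1 n := mem_Icc.2 ⟨by omega, hkn⟩
  have hT := sum_Icc_eq_add_sum_Icc_succ Γ (by omega : k + 1 ≤ n)
  rw [liquidWelfare_mechanism hkn hv hB hΓ hq hqv hx1 hx3]
  refine max_le ?_ ?_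
  · have := agentWelfare_nonneg (hv _ hk1n) (hB _ hk1n) (hΓ _ hk1n)
      (by rw [hx2]; linarith : -Γ (k + 1) ≤ x (k + 1))
    linarith
  · have hS : 0 ≤ ∑ i ∈ Icc 1 k, B i := sum_nonneg fun i hi => hB i (hlow i hi)
    have hpaid : v (k + 1) * ((∑ i ∈ Icc 1 k, B i) / q) ≤ ∑ i ∈ Icc 1 k, B i :=
      calc _ ≤ q * ((∑ i ∈ Icc 1 k, B i) / q) := mul_le_mul_of_nonneg_right hvq (by positivity)
        _ = _ := mul_div_cancel₀ _ hq.ne'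
    have hSA : ∑ i ∈ Icc 1 k, B i ≤ ∑ i ∈ Icc 1 k, (B i + v i * Γ i) := sum_le_sum fun i hi =>
      le_add_of_nonneg_right (mul_nonneg (hv i (hlow i hi)) (hΓ i (hlow i hi)))
    have := sub_le_agentWelfare (Γ := Γ (k + 1)) hpaid hR
    rw [← hx2, ← hT] at this
    linarith

end DifferentialPricing

open DifferentialPricing

theorem stmt_13_general (n k : ℕ) (v B Γ : ℕ → ℝ)
    (hv : ∀ i ∈ Icc 1 n, 0 < v i)
    (hsort : ∀ i ∈ Icc 1 n, ∀ j ∈ Icc 1 n, i ≤ j → v j ≤ v i)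
    (hB : ∀ i ∈ Icc 1 n, 0 ≤ B i) (hΓ : ∀ i ∈ Icc 1 n, 0 ≤ Γ i)
    (hkn : k + 1 ≤ n)
    (hkle : ∑ i ∈ Icc 1 k, B i ≤ v k * ∑ i ∈ Icc (k+1) n, Γ i)
    (hkmax : ∀ l, 1 ≤ l → l ≤ n →
      (∑ i ∈ Icc 1 l, B i ≤ v l * ∑ i ∈ Icc (l+1) n, Γ i) → l ≤ k)
    (q : ℝ)
    (hq : q = if v (k+1) * ∑ i ∈ Icc (k+1) n, Γ i < ∑ i ∈ Icc 1 k, B i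
      then (∑ i ∈ Icc 1 k, B i) / ∑ i ∈ Icc (k+1) n, Γ i else v (k+1))
    (x : ℕ → ℝ)
    (hx1 : ∀ i, 1 ≤ i → i ≤ k → x i = B i / q)
    (hx2 : x (k+1) = ∑ i ∈ Icc (k+2) n, Γ i - ∑ i ∈ Icc 1 k, B i / q)
    (hx3 : ∀ i, k+2 ≤ i → i ≤ n → x i = -Γ i)
    (OPT : ℝ)
    (hOPT : IsGreatest {w : ℝ | ∃ y : ℕ → ℝ,
      (∑ i ∈ Icc 1 n, y i = 0) ∧ (∀ i ∈ Icc 1 n, -Γ i ≤ y i) ∧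
      w = ∑ i ∈ Icc 1 n, (v i * Γ i + min (v i * y i) (B i))} OPT) :
    OPT ≤ 2 * ∑ i ∈ Icc 1 n, (v i * Γ i + min (v i * x i) (B i)) ∧
    OPT ≤ ∑ i ∈ Icc 1 k, (B i + v i * Γ i) + v (k+1) * ∑ i ∈ Icc (k+1) n, Γ i ∧
    max (∑ i ∈ Icc 1 k, (B i + v i * Γ i)) (v (k+1) * ∑ i ∈ Icc (k+1) n, Γ i)
      ≤ ∑ i ∈ Icc 1 n, (v i * Γ i + min (v i * x i) (B i)) := by
  obtain ⟨⟨y, hy0, hy, rfl⟩, -⟩ := hOPT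
  show liquidWelfare n v B Γ y ≤ 2 * liquidWelfare n v B Γ x ∧ _ ∧ _ ≤ liquidWelfare n v B Γ x
  set S := ∑ i ∈ Icc 1 k, B i
  set T := ∑ i ∈ Icc (k + 1) n, Γ i
  have hk1n : k + 1 ∈ Icc 1 n := mem_Icc.2 ⟨by omega, hkn⟩
  have hvk1 : 0 < v (k + 1) := hv _ hk1n
  have hT : 0 ≤ T := sum_nonneg fun i hi => hΓ i (Icc_subset_Icc_left (by omega) hi)
  have hlow : ∀ i ∈ Icc 1 k, i ∈ Icc 1 n := fun _ hi => Icc_subset_Icc_right (by omega) hi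
  have hhigh : ∀ i ∈ Icc 1 k, v (k + 1) ≤ v i := fun i hi =>
    hsort i (hlow i hi) _ hk1n ((mem_Icc.1 hi).2.trans k.le_succ)
  have hq' : q = clearingPrice (v (k + 1)) S T := hq
  have hqv : ∀ i ∈ Icc 1 k, q ≤ v i := fun i hi => by
    have hk : k ∈ Icc 1 n := mem_Icc.2 ⟨(mem_Icc.1 hi).1.trans (mem_Icc.1 hi).2, by omega⟩
    rw [hq']
    exact clearingPrice_le (hhigh i hi) hT
      (hkle.trans (mul_le_mul_of_nonneg_right (hsort i (hlow i hi) k hk (mem_Icc.1 hi).2) hT))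
  have hR : v (k + 1) * ∑ i ∈ Icc (k + 2) n, Γ i ≤ S + B (k + 1) := by
    by_contra! h
    have := hkmax (k + 1) (by omega) hkn (by rw [sum_Icc_succ_top (by omega)]; exact h.le)
    omega
  have hOPT : liquidWelfare n v B Γ y ≤ ∑ i ∈ Icc 1 k, (B i + v i * Γ i) + v (k + 1) * T :=
    liquidWelfare_le_of_price (by omega) hvk1.le hB hhigh
      (fun i hi => hsort _ hk1n i (Icc_subset_Icc_left (by omega) hi) (mem_Icc.1 hi).1) hy0 hy
  have hM := le_liquidWelfare_mechanism hkn (fun i hi => (hv i hi).le) hB hΓ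
    (hq' ▸ clearingPrice_pos hvk1 hT hkle) hqv (hq' ▸ le_clearingPrice hT hkle)
    (hq' ▸ div_clearingPrice_le hvk1 hT) hR hx1 (by rw [hx2, sum_div]) hx3
  exact ⟨by linarith [le_max_left _ _ |>.trans hM, le_max_right _ _ |>.trans hM], hOPT, hM⟩

/-- The Differential Pricing Mechanism is a `1/2`-approximation:
`OPT ≤ 2·MLW(x)`; more precisely
`OPT ≤ ∑_{i≤k}(B_i + v_iΓ_i) + v_{k+1}·∑_{i≥k+1}Γ_i` and
`MLW(x) ≥ max{∑_{i≤k}(B_i + v_iΓ_i), v_{k+1}·∑_{i≥k+1}Γ_i}`. -/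
theorem stmt_13 (n k : ℕ) (v B Γ : ℕ → ℝ)
    (hv : ∀ i ∈ Icc 1 n, 0 < v i)
    (hsort : ∀ i ∈ Icc 1 n, ∀ j ∈ Icc 1 n, i ≤ j → v j ≤ v i)
    (hB : ∀ i ∈ Icc 1 n, 0 ≤ B i) (hΓ : ∀ i ∈ Icc 1 n, 0 ≤ Γ i)
    (hk1 : 1 ≤ k) (hkn : k + 1 ≤ n)
    (hkle : ∑ i ∈ Icc 1 k, B i ≤ v k * ∑ i ∈ Icc (k+1) n, Γ i)
    (hkmax : ∀ l, 1 ≤ l → l ≤ n →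
      (∑ i ∈ Icc 1 l, B i ≤ v l * ∑ i ∈ Icc (l+1) n, Γ i) → l ≤ k)
    (q : ℝ)
    (hq : q = if v (k+1) * ∑ i ∈ Icc (k+1) n, Γ i < ∑ i ∈ Icc 1 k, B i
      then (∑ i ∈ Icc 1 k, B i) / ∑ i ∈ Icc (k+1) n, Γ i else v (k+1))
    (x : ℕ → ℝ)
    (hx1 : ∀ i, 1 ≤ i → i ≤ k → x i = B i / q)
    (hx2 : x (k+1) = ∑ i ∈ Icc (k+2) n, Γ i - ∑ i ∈ Icc 1 k, B i / q)
    (hx3 : ∀ i, k+2 ≤ i → i ≤ n → x i = -Γ i)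
    (OPT : ℝ)
    (hOPT : IsGreatest {w : ℝ | ∃ y : ℕ → ℝ,
      (∑ i ∈ Icc 1 n, y i = 0) ∧ (∀ i ∈ Icc 1 n, -Γ i ≤ y i) ∧
      w = ∑ i ∈ Icc 1 n, (v i * Γ i + min (v i * y i) (B i))} OPT) :
    OPT ≤ 2 * ∑ i ∈ Icc 1 n, (v i * Γ i + min (v i * x i) (B i)) ∧
    OPT ≤ ∑ i ∈ Icc 1 k, (B i + v i * Γ i) + v (k+1) * ∑ i ∈ Icc (k+1) n, Γ i ∧
    max (∑ i ∈ Icc 1 k, (B i + v i * Γ i)) (v (k+1) * ∑ i ∈ Icc (k+1) n, Γ i)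
      ≤ ∑ i ∈ Icc 1 n, (v i * Γ i + min (v i * x i) (B i)) :=
  stmt_13_general n k v B Γ hv hsort hB hΓ hkn hkle hkmax q hq x hx1 hx2 hx3 OPT hOPT
end

section
/- With agents sorted v_1 ≥ ... ≥ v_n > 0 and k = max{l : Σ_{i=1}^l B_i ≤ v_l·Σ_{i=l+1}^n Γ_i}, if Σ_{i=1}^k B_i > v_{k+1}·Σ_{i=k+1}^n Γ_i, then the mechanism's welfare satisfies MLW(x) = Σ_{i=1}^k (B_i + v_i·Γ_i) > v_{k+1}·Σ_{i=k+1}^n Γ_i. -/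
open Finset

/-!
From `v_{k+1}·∑_{i>k} Γ_i < ∑_{i≤k} B_i ≤ v_k·∑_{i>k} Γ_i` both sums are positive, so the price
`q = ∑_{i≤k} B_i / ∑_{i>k} Γ_i` satisfies `0 < q ≤ v_k ≤ v_i` for every buyer `i ≤ k`: the goods
`B_i / q` are worth at least `B_i` to buyer `i`, who therefore contributes exactly `B_i`. The price
clears the market, `∑_{i≤k} B_i / q = ∑_{i>k} Γ_i`, so agent `k+1` sells all of `Γ_{k+1}` too, and
each seller contributes `v_i·Γ_i - v_i·Γ_i = 0`.
-/

section LinearOrderedField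

variable {α : Type*} [Field α] [LinearOrder α] [IsStrictOrderedRing α]

lemma min_mul_div_eq_right {q v b : α} (hq : 0 < q) (hqv : q ≤ v) (hb : 0 ≤ b) :
    min (v * (b / q)) b = b :=
  min_eq_right <| calc
    b = q * (b / q) := (mul_div_cancel₀ b hq.ne').symm
    _ ≤ v * (b / q) := mul_le_mul_of_nonneg_right hqv (div_nonneg hb hq.le)

lemma mul_add_min_mul_neg_eq_zero {v γ b : α} (hv : 0 ≤ v) (hγ : 0 ≤ γ) (hb : 0 ≤ b) :
    v * γ + min (v * -γ) b = 0 := by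
  have : v * -γ ≤ b := by nlinarith
  rw [min_eq_left this]
  ring

end LinearOrderedField

namespace Finset

variable {M : Type*}

lemma sum_Icc_one_add_sum_Icc_succ [AddCommMonoid M] (f : ℕ → M) {k n : ℕ} (hkn : k ≤ n) :
    ∑ i ∈ Icc 1 k, f i + ∑ i ∈ Icc (k + 1) n, f i = ∑ i ∈ Icc 1 n, f i := by
  simpa only [← Icc_add_one_left_eq_Ioc, zero_add] using sum_Ioc_consecutive f k.zero_le hkn

lemma sum_Icc_one_eq_of_eq_zero_Icc_succ [AddCommMonoid M] {f g : ℕ → M} {k n : ℕ}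
    (hkn : k ≤ n) (hlow : ∀ i ∈ Icc 1 k, f i = g i)
    (hhigh : ∀ i ∈ Icc (k + 1) n, f i = 0) :
    ∑ i ∈ Icc 1 n, f i = ∑ i ∈ Icc 1 k, g i := by
  rw [← sum_Icc_one_add_sum_Icc_succ f hkn, sum_eq_zero hhigh, add_zero, sum_congr rfl hlow]

lemma sum_Icc_add_two_sub_sum_Icc_add_one [AddCommGroup M] (f : ℕ → M) {k n : ℕ}
    (hkn : k + 1 ≤ n) :
    ∑ i ∈ Icc (k + 2) n, f i - ∑ i ∈ Icc (k + 1) n, f i = -f (k + 1) := by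
  rw [← insert_Icc_add_one_left_eq_Icc hkn, sum_insert (by simp), add_assoc k 1 1,
    one_add_one_eq_two]
  abel

end Finset

theorem stmt_14_general (n k : ℕ) (v B Γ : ℕ → ℝ)
    (hv : ∀ i ∈ Icc 1 n, 0 < v i)
    (hsort : ∀ i ∈ Icc 1 n, ∀ j ∈ Icc 1 n, i ≤ j → v j ≤ v i)
    (hB : ∀ i ∈ Icc 1 n, 0 ≤ B i) (hΓ : ∀ i ∈ Icc 1 n, 0 ≤ Γ i)
    (hkn : k + 1 ≤ n)
    (hkle : ∑ i ∈ Icc 1 k, B i ≤ v k * ∑ i ∈ Icc (k+1) n, Γ i)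
    (hcase : v (k+1) * ∑ i ∈ Icc (k+1) n, Γ i < ∑ i ∈ Icc 1 k, B i)
    (q : ℝ) (hq : q = (∑ i ∈ Icc 1 k, B i) / ∑ i ∈ Icc (k+1) n, Γ i)
    (x : ℕ → ℝ)
    (hx1 : ∀ i, 1 ≤ i → i ≤ k → x i = B i / q)
    (hx2 : x (k+1) = ∑ i ∈ Icc (k+2) n, Γ i - ∑ i ∈ Icc 1 k, B i / q)
    (hx3 : ∀ i, k+2 ≤ i → i ≤ n → x i = -Γ i) :
    ∑ i ∈ Icc 1 n, (v i * Γ i + min (v i * x i) (B i))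
      = ∑ i ∈ Icc 1 k, (B i + v i * Γ i) ∧
    v (k+1) * ∑ i ∈ Icc (k+1) n, Γ i < ∑ i ∈ Icc 1 k, (B i + v i * Γ i) := by
  have hbuyer : ∀ i ∈ Icc 1 k, i ∈ Icc 1 n := fun i hi => Icc_subset_Icc le_rfl (by omega) hi
  have hseller : ∀ i ∈ Icc (k+1) n, i ∈ Icc 1 n :=
    fun i hi => Icc_subset_Icc (by omega) le_rfl hi
  have hSG : 0 < ∑ i ∈ Icc (k+1) n, Γ i := by
    refine (sum_nonneg fun i hi => hΓ i (hseller i hi)).lt_of_ne fun h => ?_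
    rw [← h, mul_zero] at hkle hcase
    linarith
  have hSB : 0 < ∑ i ∈ Icc 1 k, B i :=
    (mul_nonneg (hv (k+1) (by simp; omega)).le hSG.le).trans_lt hcase
  have hq_pos : 0 < q := hq ▸ div_pos hSB hSG
  have hq_le : q ≤ v k := by rwa [hq, div_le_iff₀ hSG]
  have hx_seller : ∀ i ∈ Icc (k+1) n, x i = -Γ i := by
    intro i hi
    rcases (mem_Icc.1 hi).1.eq_or_lt with rfl | hi'
    · have hclear : (∑ i ∈ Icc 1 k, B i) / q = ∑ i ∈ Icc (k+1) n, Γ i := by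
        rw [hq, div_div_cancel₀ hSB.ne']
      rw [hx2, ← sum_div, hclear, sum_Icc_add_two_sub_sum_Icc_add_one Γ hkn]
    · exact hx3 i hi' (mem_Icc.1 hi).2
  have hwelfare : ∑ i ∈ Icc 1 n, (v i * Γ i + min (v i * x i) (B i))
      = ∑ i ∈ Icc 1 k, (B i + v i * Γ i) := by
    refine sum_Icc_one_eq_of_eq_zero_Icc_succ (by omega) (fun i hi => ?_) (fun i hi => ?_)
    · obtain ⟨h1i, hik⟩ := mem_Icc.1 hi
      have hv_ge : q ≤ v i := hq_le.trans (hsort i (hbuyer i hi) k (by simp; omega) hik)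
      rw [hx1 i h1i hik, min_mul_div_eq_right hq_pos hv_ge (hB i (hbuyer i hi)), add_comm]
    · rw [hx_seller i hi]
      exact mul_add_min_mul_neg_eq_zero (hv i (hseller i hi)).le (hΓ i (hseller i hi))
        (hB i (hseller i hi))
  refine ⟨hwelfare, ?_⟩
  have hgoods : 0 ≤ ∑ i ∈ Icc 1 k, v i * Γ i :=
    sum_nonneg fun i hi => mul_nonneg (hv i (hbuyer i hi)).le (hΓ i (hbuyer i hi))
  rw [sum_add_distrib]
  linarith

/-- Case `∑_{i=1}^k B_i > v_{k+1}·∑_{i=k+1}^n Γ_i` of the Differential Pricing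
Mechanism (so `q = ∑_{i≤k} B_i / ∑_{i≥k+1} Γ_i`): the mechanism's welfare equals
`∑_{i=1}^k (B_i + v_iΓ_i)` and strictly exceeds `v_{k+1}·∑_{i=k+1}^n Γ_i`. -/
theorem stmt_14 (n k : ℕ) (v B Γ : ℕ → ℝ)
    (hv : ∀ i ∈ Icc 1 n, 0 < v i)
    (hsort : ∀ i ∈ Icc 1 n, ∀ j ∈ Icc 1 n, i ≤ j → v j ≤ v i)
    (hB : ∀ i ∈ Icc 1 n, 0 ≤ B i) (hΓ : ∀ i ∈ Icc 1 n, 0 ≤ Γ i)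
    (hk1 : 1 ≤ k) (hkn : k + 1 ≤ n)
    (hkle : ∑ i ∈ Icc 1 k, B i ≤ v k * ∑ i ∈ Icc (k+1) n, Γ i)
    (hkmax : ∀ l, 1 ≤ l → l ≤ n →
      (∑ i ∈ Icc 1 l, B i ≤ v l * ∑ i ∈ Icc (l+1) n, Γ i) → l ≤ k)
    (hcase : v (k+1) * ∑ i ∈ Icc (k+1) n, Γ i < ∑ i ∈ Icc 1 k, B i)
    (q : ℝ) (hq : q = (∑ i ∈ Icc 1 k, B i) / ∑ i ∈ Icc (k+1) n, Γ i)
    (x : ℕ → ℝ)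
    (hx1 : ∀ i, 1 ≤ i → i ≤ k → x i = B i / q)
    (hx2 : x (k+1) = ∑ i ∈ Icc (k+2) n, Γ i - ∑ i ∈ Icc 1 k, B i / q)
    (hx3 : ∀ i, k+2 ≤ i → i ≤ n → x i = -Γ i) :
    ∑ i ∈ Icc 1 n, (v i * Γ i + min (v i * x i) (B i))
      = ∑ i ∈ Icc 1 k, (B i + v i * Γ i) ∧
    v (k+1) * ∑ i ∈ Icc (k+1) n, Γ i < ∑ i ∈ Icc 1 k, (B i + v i * Γ i) :=
  stmt_14_general n k v B Γ hv hsort hB hΓ hkn hkle hcase q hq x hx1 hx2 hx3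
end

section
/- Equilibrium uniqueness: given agents (v_i, B_i, Γ_i) and exchange constraints (I_i = [−l_i, r_i], λ_i) with buyer set 𝓑 = {i : v_i ≥ λ_i} and seller set 𝓢 = {i : v_i < λ_i}, if Σ_{i∈𝓑} min{r_i, B_i/λ_i} = Σ_{j∈𝓢} min{l_j, Γ_j}, then there is a unique reachable market state, given by x_i = min{r_i, B_i/λ_i} for each buyer i and x_j = −min{l_j, Γ_j} for each seller j, and its market liquid welfare equals Σ_{i∈𝓑}(v_i·Γ_i + min{v_i·r_i, B_i}) + Σ_{j∈𝓢} v_j·max{0, Γ_j − l_j}. -/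
/-!
Feasibility alone bounds every buyer's trade above by `min r (B / λ)` and every seller's trade
below by `-min l Γ`. The balance hypothesis says these bounds sum to zero, the same total as any
market state. The equilibrium condition pins one side of the market to its bound, so the totals
force the other side onto its bound as well. The welfare formula is then an agent-by-agent
computation.
-/

open Finset

/-- A market state `(x, p)` is reachable under exchange constraints
`(I_i = [−l_i, r_i], λ_i)`: self-consistent, feasible (within intervals,
endowments and budgets, with `p_i = λ_i x_i`), and in equilibrium (either every
buyer buys maximally within budget and interval, or every seller sells
maximally). -/
def Reachable (n : ℕ) (v B Γ l r lam : ℕ → ℝ) (x p : ℕ → ℝ) : Prop :=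
  (∑ i ∈ Icc 1 n, x i = 0) ∧
  (∀ i ∈ Icc 1 n, -(l i) ≤ x i ∧ x i ≤ r i ∧ -Γ i ≤ x i ∧
    p i = lam i * x i ∧ p i ≤ B i) ∧
  ((∀ i ∈ Icc 1 n, lam i ≤ v i → p i = min (lam i * r i) (B i)) ∨
   (∀ j ∈ Icc 1 n, v j < lam j → x j = -(min (l j) (Γ j))))

theorem Finset.sum_filter_le_add_sum_filter_lt {ι α M : Type*} [AddCommMonoid M]
    [LinearOrder α] (s : Finset ι) (a b : ι → α) (f : ι → M) :
    ∑ i ∈ s.filter (fun i => a i ≤ b i), f i + ∑ i ∈ s.filter (fun i => b i < a i), f i =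
      ∑ i ∈ s, f i := by
  simpa only [not_le] using sum_filter_add_sum_filter_not s (fun i => a i ≤ b i) f

theorem Finset.eqOn_of_sum_eq_of_le_of_ge {ι M : Type*} [AddCommMonoid M] [PartialOrder M]
    [IsOrderedCancelAddMonoid M] {s : Finset ι} (p : ι → Prop) [DecidablePred p]
    {f g : ι → M} (hsum : ∑ i ∈ s, f i = ∑ i ∈ s, g i)
    (hle : ∀ i ∈ s, p i → f i ≤ g i) (hge : ∀ i ∈ s, ¬p i → g i ≤ f i)
    (hside : (∀ i ∈ s, p i → f i = g i) ∨ (∀ i ∈ s, ¬p i → f i = g i)) :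
    ∀ i ∈ s, f i = g i := by
  rw [← sum_filter_add_sum_filter_not s p, ← sum_filter_add_sum_filter_not s p g] at hsum
  have hpos : ∀ i ∈ s.filter p, f i ≤ g i := fun i hi =>
    hle i (mem_filter.1 hi).1 (mem_filter.1 hi).2
  have hneg : ∀ i ∈ s.filter (¬p ·), g i ≤ f i := fun i hi =>
    hge i (mem_filter.1 hi).1 (mem_filter.1 hi).2
  obtain ⟨hp, hn⟩ : (∀ i ∈ s, p i → f i = g i) ∧ (∀ i ∈ s, ¬p i → f i = g i) := by
    rcases hside with hp | hn
    · have hsum_p := sum_congr rfl fun i hi => hp i (mem_filter.1 hi).1 (mem_filter.1 hi).2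
      rw [hsum_p, add_right_inj] at hsum
      refine ⟨hp, fun i hi hpi => ((sum_eq_sum_iff_of_le hneg).1 hsum.symm i ?_).symm⟩
      exact mem_filter.2 ⟨hi, hpi⟩
    · have hsum_n := sum_congr rfl fun i hi => hn i (mem_filter.1 hi).1 (mem_filter.1 hi).2
      rw [hsum_n, add_left_inj] at hsum
      exact ⟨fun i hi hpi => (sum_eq_sum_iff_of_le hpos).1 hsum i (mem_filter.2 ⟨hi, hpi⟩), hn⟩
  intro i hi
  by_cases hpi : p i
  exacts [hp i hi hpi, hn i hi hpi]

theorem min_mul_div_eq_mul_min {lam : ℝ} (hlam : 0 < lam) (r B : ℝ) :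
    min (lam * r) B = lam * min r (B / lam) := by
  rw [mul_min_of_nonneg _ _ hlam.le, mul_div_cancel₀ _ hlam.ne']

def TradeFeasible (l r Γ lam B x p : ℝ) : Prop :=
  -l ≤ x ∧ x ≤ r ∧ -Γ ≤ x ∧ p = lam * x ∧ p ≤ B

namespace TradeFeasible

variable {l r Γ lam B x p : ℝ}

theorem le_min_div (h : TradeFeasible l r Γ lam B x p) (hlam : 0 < lam) :
    x ≤ min r (B / lam) := by
  obtain ⟨-, hxr, -, rfl, hB⟩ := h
  exact le_min hxr ((le_div_iff₀ hlam).2 (by linarith))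

theorem neg_min_le (h : TradeFeasible l r Γ lam B x p) : -min l Γ ≤ x := by
  obtain ⟨hlx, -, hΓx, -⟩ := h
  rw [neg_le]
  exact le_min (by linarith) (by linarith)

theorem eq_min_div_of_price_eq (h : TradeFeasible l r Γ lam B x p) (hlam : 0 < lam)
    (hp : p = min (lam * r) B) : x = min r (B / lam) := by
  rw [h.2.2.2.1, min_mul_div_eq_mul_min hlam] at hp
  exact mul_left_cancel₀ hlam.ne' hp

theorem of_buy (hl : 0 ≤ l) (hr : 0 ≤ r) (hΓ : 0 ≤ Γ) (hB : 0 ≤ B) (hlam : 0 < lam) :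
    TradeFeasible l r Γ lam B (min r (B / lam)) (lam * min r (B / lam)) := by
  have hx : 0 ≤ min r (B / lam) := le_min hr (div_nonneg hB hlam.le)
  refine ⟨by linarith, min_le_left _ _, by linarith, rfl, ?_⟩
  calc lam * min r (B / lam) ≤ lam * (B / lam) := by gcongr; exact min_le_right _ _
    _ = B := mul_div_cancel₀ _ hlam.ne'

theorem of_sell (hl : 0 ≤ l) (hr : 0 ≤ r) (hΓ : 0 ≤ Γ) (hB : 0 ≤ B) (hlam : 0 < lam) :
    TradeFeasible l r Γ lam B (-min l Γ) (lam * -min l Γ) := by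
  have hx : -min l Γ ≤ 0 := neg_nonpos.2 (le_min hl hΓ)
  refine ⟨neg_le_neg (min_le_left _ _), by linarith, neg_le_neg (min_le_right _ _), rfl, ?_⟩
  nlinarith

end TradeFeasible

/-- A buyer's liquid value is unchanged by capping the purchase at the budget: `B / lam` units
already cost `B` and are worth at least `B` to the buyer since `lam ≤ v`. -/
theorem min_mul_min_div_eq {v lam r B : ℝ} (hlam : 0 < lam) (hv : lam ≤ v) (hB : 0 ≤ B) :
    min (v * min r (B / lam)) B = min (v * r) B := by
  rcases le_total r (B / lam) with h | h
  · rw [min_eq_left h]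
  · have hBv : B ≤ v * (B / lam) := by
      calc B = lam * (B / lam) := (mul_div_cancel₀ _ hlam.ne').symm
        _ ≤ v * (B / lam) := by gcongr
    have hvr : v * (B / lam) ≤ v * r := by gcongr; linarith
    rw [min_eq_right h, min_eq_right hBv, min_eq_right (hBv.trans hvr)]

theorem mul_add_min_mul_neg_min_eq {v B Γ l : ℝ} (hv : 0 ≤ v) (hB : 0 ≤ B) (hl : 0 ≤ l)
    (hΓ : 0 ≤ Γ) : v * Γ + min (v * -min l Γ) B = v * max 0 (Γ - l) := by
  have hsold : v * -min l Γ ≤ B := by nlinarith [le_min hl hΓ]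
  rw [min_eq_left hsold, ← mul_add, ← sub_eq_add_neg, ← max_sub_sub_left, sub_self, max_comm]

/-- Equilibrium-Unique Property: if demand balances supply,
`∑_{i∈𝓑} min{r_i, B_i/λ_i} = ∑_{j∈𝓢} min{l_j, Γ_j}`, then the reachable state is
unique, given by `x_i = min{r_i, B_i/λ_i}` for buyers and `x_j = −min{l_j, Γ_j}`
for sellers, and its market liquid welfare equals
`∑_{𝓑}(v_iΓ_i + min{v_i r_i, B_i}) + ∑_{𝓢} v_j·max{0, Γ_j − l_j}`. -/
theorem stmt_16 (n : ℕ) (v B Γ l r lam : ℕ → ℝ)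
    (hv : ∀ i ∈ Icc 1 n, 0 ≤ v i)
    (hB : ∀ i ∈ Icc 1 n, 0 ≤ B i) (hΓ : ∀ i ∈ Icc 1 n, 0 ≤ Γ i)
    (hl : ∀ i ∈ Icc 1 n, 0 ≤ l i) (hr : ∀ i ∈ Icc 1 n, 0 ≤ r i)
    (hlam : ∀ i ∈ Icc 1 n, 0 < lam i)
    (hbal : ∑ i ∈ (Icc 1 n).filter (fun i => lam i ≤ v i), min (r i) (B i / lam i)
      = ∑ j ∈ (Icc 1 n).filter (fun j => v j < lam j), min (l j) (Γ j))
    (xs ps : ℕ → ℝ)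
    (hxs : ∀ i ∈ Icc 1 n, xs i =
      if lam i ≤ v i then min (r i) (B i / lam i) else -(min (l i) (Γ i)))
    (hps : ∀ i ∈ Icc 1 n, ps i = lam i * xs i) :
    Reachable n v B Γ l r lam xs ps ∧
    (∀ x p : ℕ → ℝ, Reachable n v B Γ l r lam x p → ∀ i ∈ Icc 1 n, x i = xs i) ∧
    ∑ i ∈ Icc 1 n, (v i * Γ i + min (v i * xs i) (B i)) =
      ∑ i ∈ (Icc 1 n).filter (fun i => lam i ≤ v i),
        (v i * Γ i + min (v i * r i) (B i))
      + ∑ j ∈ (Icc 1 n).filter (fun j => v j < lam j),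
        v j * max 0 (Γ j - l j) := by
  have hbuy : ∀ i ∈ Icc 1 n, lam i ≤ v i → xs i = min (r i) (B i / lam i) :=
    fun i hi h => by rw [hxs i hi, if_pos h]
  have hsell : ∀ i ∈ Icc 1 n, v i < lam i → xs i = -min (l i) (Γ i) :=
    fun i hi h => by rw [hxs i hi, if_neg h.not_ge]
  have hsum : ∑ i ∈ Icc 1 n, xs i = 0 := by
    rw [← sum_filter_le_add_sum_filter_lt _ lam v,
      sum_congr rfl fun i hi => hbuy i (mem_filter.1 hi).1 (mem_filter.1 hi).2,
      sum_congr rfl fun i hi => hsell i (mem_filter.1 hi).1 (mem_filter.1 hi).2,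
      sum_neg_distrib, hbal, add_neg_cancel]
  have hfeas : ∀ i ∈ Icc 1 n, TradeFeasible (l i) (r i) (Γ i) (lam i) (B i) (xs i) (ps i) := by
    intro i hi
    rw [hps i hi]
    by_cases h : lam i ≤ v i
    · rw [hbuy i hi h]
      exact .of_buy (hl i hi) (hr i hi) (hΓ i hi) (hB i hi) (hlam i hi)
    · rw [hsell i hi (not_le.1 h)]
      exact .of_sell (hl i hi) (hr i hi) (hΓ i hi) (hB i hi) (hlam i hi)
  refine ⟨⟨hsum, hfeas, Or.inl fun i hi h => ?_⟩, ?_, ?_⟩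
  · rw [hps i hi, hbuy i hi h, min_mul_div_eq_mul_min (hlam i hi)]
  · rintro x p ⟨hx0, hxfeas, hmax⟩
    refine eqOn_of_sum_eq_of_le_of_ge (fun i => lam i ≤ v i) (hx0.trans hsum.symm)
      (fun i hi h => hbuy i hi h ▸ TradeFeasible.le_min_div (hxfeas i hi) (hlam i hi))
      (fun i hi h => hsell i hi (not_le.1 h) ▸ TradeFeasible.neg_min_le (hxfeas i hi)) ?_
    refine hmax.imp (fun hb i hi h => ?_) fun hs i hi h => ?_
    · rw [hbuy i hi h]
      exact TradeFeasible.eq_min_div_of_price_eq (hxfeas i hi) (hlam i hi) (hb i hi h)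
    · rw [hsell i hi (not_le.1 h)]
      exact hs i hi (not_le.1 h)
  · rw [← sum_filter_le_add_sum_filter_lt _ lam v]
    congr 1 <;> refine sum_congr rfl fun i hi => ?_ <;> obtain ⟨hi, h⟩ := mem_filter.1 hi
    · rw [hbuy i hi h, min_mul_min_div_eq (hlam i hi) h (hB i hi)]
    · rw [hsell i hi h, mul_add_min_mul_neg_min_eq (hv i hi) (hB i hi) (hl i hi) (hΓ i hi)]
end

section
/- Existence of a market optimal price: for any agent set {(v_i, B_i, Γ_i)}, there exist intervals I*_i and a single uniform price λ* such that, under constraints (I*_i, λ*) for all i, the supply-demand balance Σ_{i∈𝓑} min{r*_i, B_i/λ*} = Σ_{j∈𝓢} min{l*_j, Γ_j} holds (where 𝓑 = {i : v_i ≥ λ*}, 𝓢 = {i : v_i < λ*}) and the unique reachable state achieves the optimal market liquid welfare OPT. -/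
/-!
At an optimal allocation no buyer (positive trade) is budget-capped and no seller (negative
trade) values the good more than a buyer: otherwise moving a little of the good from the buyer
back to the seller would raise the welfare. A tie at the lowest buyer valuation `ν` is removed
by cancelling trade between the buyers and the sellers of valuation `ν`, which leaves the welfare
unchanged since all of them trade at the marginal rate `ν`. A price then strictly separates
buyers from sellers; with intervals running from `0` to each agent's optimal trade, supply and
demand balance, and pinning either side at its interval ends forces every reachable state to be
the optimal allocation.
-/

open Finset

section Allocation

variable {ι : Type*} {s : Finset ι} {v B Γ y : ι → ℝ}

def liquidWelfare (s : Finset ι) (v B Γ y : ι → ℝ) : ℝ :=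
  ∑ i ∈ s, (v i * Γ i + min (v i * y i) (B i))

def IsAllocation (s : Finset ι) (Γ y : ι → ℝ) : Prop :=
  ∑ i ∈ s, y i = 0 ∧ ∀ i ∈ s, -Γ i ≤ y i

def IsOptimalAllocation (s : Finset ι) (v B Γ y : ι → ℝ) : Prop :=
  IsAllocation s Γ y ∧
    ∀ z, IsAllocation s Γ z → liquidWelfare s v B Γ z ≤ liquidWelfare s v B Γ y

lemma exists_isOptimalAllocation_of_isGreatest {OPT : ℝ}
    (h : IsGreatest {w : ℝ | ∃ y : ι → ℝ, (∑ i ∈ s, y i = 0) ∧ (∀ i ∈ s, -Γ i ≤ y i) ∧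
      w = ∑ i ∈ s, (v i * Γ i + min (v i * y i) (B i))} OPT) :
    ∃ y, IsOptimalAllocation s v B Γ y ∧ liquidWelfare s v B Γ y = OPT := by
  obtain ⟨⟨y, hsum, hΓ, rfl⟩, hmax⟩ := h
  exact ⟨y, ⟨⟨hsum, hΓ⟩, fun z hz => hmax ⟨z, hz.1, hz.2, rfl⟩⟩, rfl⟩

lemma IsOptimalAllocation.liquidWelfare_eq {z : ι → ℝ} (hy : IsOptimalAllocation s v B Γ y)
    (hz : IsOptimalAllocation s v B Γ z) : liquidWelfare s v B Γ y = liquidWelfare s v B Γ z :=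
  le_antisymm (hz.2 y hy.1) (hy.2 z hz.1)

lemma liquidWelfare_eq_of_mul_le (h : ∀ i ∈ s, v i * y i ≤ B i) :
    liquidWelfare s v B Γ y = ∑ i ∈ s, v i * (Γ i + y i) :=
  sum_congr rfl fun i hi => by rw [min_eq_left (h i hi)]; ring

lemma sum_sub_sum_eq_of_eq_off_pair {M : Type*} [AddCommGroup M] {f g : ι → M} {i j : ι}
    (hij : i ≠ j) (hi : i ∈ s) (hj : j ∈ s) (h : ∀ k ∈ s, k ≠ i → k ≠ j → f k = g k) :
    ∑ k ∈ s, f k - ∑ k ∈ s, g k = (f i - g i) + (f j - g j) := by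
  classical
  rw [← sum_sub_distrib, ← sum_pair (f := fun k => f k - g k) hij]
  refine (sum_subset (insert_subset hi (singleton_subset_iff.2 hj)) fun k hk hkij => ?_).symm
  simp only [mem_insert, mem_singleton, not_or] at hkij
  rw [h k hk hkij.1 hkij.2, sub_self]

/-- Compare `y` with the allocation that moves `δ` units from the buyer `i` back to the
seller `j`. -/
lemma IsOptimalAllocation.transfer_le (hy : IsOptimalAllocation s v B Γ y) {i j : ι}
    (hi : i ∈ s) (hj : j ∈ s) {δ : ℝ} (hδ : 0 < δ) (hδi : δ ≤ y i) (hδj : δ ≤ -y j)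
    (hΓi : 0 ≤ Γ i) (hvj : 0 ≤ v j) (hBj : 0 ≤ B j) :
    v j * δ ≤ min (v i * y i) (B i) - min (v i * (y i - δ)) (B i) := by
  classical
  have hij : i ≠ j := by rintro rfl; linarith
  set z := Function.update (Function.update y i (y i - δ)) j (y j + δ)
  have hzi : z i = y i - δ := by simp [z, hij]
  have hzj : z j = y j + δ := by simp [z]
  have hz : ∀ k ∈ s, k ≠ i → k ≠ j → z k = y k := fun k _ hki hkj => by simp [z, hki, hkj]
  have hzalloc : IsAllocation s Γ z := by
    refine ⟨?_, fun k hk => ?_⟩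
    · have := sum_sub_sum_eq_of_eq_off_pair hij hi hj hz
      linarith [hy.1.1]
    · by_cases hki : k = i
      · subst hki; linarith
      by_cases hkj : k = j
      · subst hkj; linarith [hy.1.2 k hk]
      · rw [hz k hk hki hkj]; exact hy.1.2 k hk
  have hwelfare := sum_sub_sum_eq_of_eq_off_pair hij hi hj
    (f := fun k => v k * Γ k + min (v k * z k) (B k))
    (g := fun k => v k * Γ k + min (v k * y k) (B k))
    fun k hk hki hkj => by rw [hz k hk hki hkj]
  have hjz : min (v j * z j) (B j) = v j * z j :=
    min_eq_left (by rw [hzj]; nlinarith)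
  have hjy : min (v j * y j) (B j) = v j * y j :=
    min_eq_left (by nlinarith)
  have hle := hy.2 z hzalloc
  simp only [liquidWelfare] at hle
  rw [hzi, hjz, hjy, hzj] at hwelfare
  nlinarith

lemma IsOptimalAllocation.mul_le_of_pos (hy : IsOptimalAllocation s v B Γ y)
    (hv : ∀ i ∈ s, 0 < v i) (hB : ∀ i ∈ s, 0 ≤ B i) (hΓ : ∀ i ∈ s, 0 ≤ Γ i)
    {i : ι} (hi : i ∈ s) (hyi : 0 < y i) : v i * y i ≤ B i := by
  by_contra! hcap
  obtain ⟨j, hj, hyj⟩ : ∃ j ∈ s, y j < 0 := by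
    by_contra! hnonneg
    linarith [hy.1.1, sum_pos' hnonneg ⟨i, hi, hyi⟩]
  have hvi := hv i hi
  set δ := min ((v i * y i - B i) / v i) (min (y i) (-y j))
  have hδ : 0 < δ := lt_min (div_pos (by linarith) hvi) (lt_min hyi (by linarith))
  have hδcap : δ * v i ≤ v i * y i - B i := (le_div_iff₀ hvi).1 (min_le_left _ _)
  have hloss := hy.transfer_le hi hj hδ ((min_le_right _ _).trans (min_le_left _ _))
    ((min_le_right _ _).trans (min_le_right _ _)) (hΓ i hi) (hv j hj).le (hB j hj)
  rw [min_eq_right hcap.le, min_eq_right (by linarith)] at hloss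
  nlinarith [hv j hj]

lemma IsOptimalAllocation.mul_le (hy : IsOptimalAllocation s v B Γ y)
    (hv : ∀ i ∈ s, 0 < v i) (hB : ∀ i ∈ s, 0 ≤ B i) (hΓ : ∀ i ∈ s, 0 ≤ Γ i) :
    ∀ i ∈ s, v i * y i ≤ B i := by
  intro i hi
  rcases lt_or_ge 0 (y i) with hyi | hyi
  · exact hy.mul_le_of_pos hv hB hΓ hi hyi
  · nlinarith [hv i hi, hB i hi]

lemma IsOptimalAllocation.le_of_pos_of_neg (hy : IsOptimalAllocation s v B Γ y)
    (hv : ∀ i ∈ s, 0 < v i) (hB : ∀ i ∈ s, 0 ≤ B i) (hΓ : ∀ i ∈ s, 0 ≤ Γ i)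
    {i j : ι} (hi : i ∈ s) (hj : j ∈ s) (hyi : 0 < y i) (hyj : y j < 0) : v j ≤ v i := by
  by_contra! hlt
  set δ := min (y i) (-y j)
  have hδ : 0 < δ := lt_min hyi (by linarith)
  have hloss := hy.transfer_le hi hj hδ (min_le_left _ _) (min_le_right _ _) (hΓ i hi)
    (hv j hj).le (hB j hj)
  have hlip : min (v i * y i) (B i) ≤ min (v i * (y i - δ)) (B i) + v i * δ := by
    rw [← min_add_add_right]
    exact min_le_min (le_of_eq (by ring)) (by nlinarith [hv i hi])
  nlinarith

/-- No agent of an optimal allocation is budget-capped, so its welfare is linear in the trades,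
and the rescaled agents all contribute at the same marginal rate `ν`. -/
lemma IsOptimalAllocation.shrink (hy : IsOptimalAllocation s v B Γ y)
    (hv : ∀ i ∈ s, 0 < v i) (hB : ∀ i ∈ s, 0 ≤ B i) (hΓ : ∀ i ∈ s, 0 ≤ Γ i)
    {w : ι → ℝ} {ν : ℝ} (hw : ∀ i ∈ s, 0 ≤ w i ∧ w i ≤ 1) (hwν : ∀ i ∈ s, w i ≠ 1 → v i = ν)
    (hsum : ∑ i ∈ s, w i * y i = 0) :
    IsOptimalAllocation s v B Γ fun i => w i * y i := by
  have hcap := hy.mul_le hv hB hΓ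
  have hzalloc : IsAllocation s Γ fun i => w i * y i := by
    refine ⟨hsum, fun i hi => ?_⟩
    obtain ⟨hw0, hw1⟩ := hw i hi
    rcases le_or_gt 0 (y i) with hyi | hyi
    · nlinarith [hΓ i hi]
    · nlinarith [hy.1.2 i hi]
  have hzcap : ∀ i ∈ s, v i * (w i * y i) ≤ B i := by
    intro i hi
    obtain ⟨hw0, hw1⟩ := hw i hi
    have hvi := hv i hi
    rcases le_or_gt 0 (y i) with hyi | hyi
    · nlinarith [hcap i hi, mul_nonneg hvi.le hyi]
    · nlinarith [hB i hi, mul_nonneg hw0 hvi.le]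
  refine ⟨hzalloc, fun x hx => (hy.2 x hx).trans_eq ?_⟩
  have hterm : ∀ i ∈ s, v i * (Γ i + w i * y i) = v i * (Γ i + y i) + ν * (w i * y i - y i) := by
    intro i hi
    by_cases hwi : w i = 1
    · rw [hwi]; ring
    · rw [hwν i hi hwi]; ring
  rw [liquidWelfare_eq_of_mul_le hcap, liquidWelfare_eq_of_mul_le hzcap, sum_congr rfl hterm,
    sum_add_distrib, ← mul_sum, sum_sub_distrib, hsum, hy.1.1]
  ring

lemma exists_one_sub_mul_eq_one_sub_mul {a b : ℝ} (ha : 0 ≤ a) (hb : 0 ≤ b) :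
    ∃ c d : ℝ, (0 ≤ c ∧ c ≤ 1) ∧ (0 ≤ d ∧ d ≤ 1) ∧ (c = 0 ∨ d = 0) ∧
      (1 - c) * a = (1 - d) * b := by
  rcases le_total a b with hab | hba
  · refine ⟨0, 1 - a / b, by norm_num, ⟨?_, ?_⟩, Or.inl rfl, ?_⟩
    · linarith [div_le_one_of_le₀ hab hb]
    · linarith [div_nonneg ha hb]
    · rcases hb.eq_or_lt with rfl | hb
      · simp [le_antisymm hab ha]
      · field_simp; ring
  · refine ⟨1 - b / a, 0, ⟨?_, ?_⟩, by norm_num, Or.inr rfl, ?_⟩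
    · linarith [div_le_one_of_le₀ hba ha]
    · linarith [div_nonneg hb ha]
    · rcases ha.eq_or_lt with rfl | ha
      · simp [le_antisymm hba hb]
      · field_simp; ring

/-- Tie-breaking: at the lowest buyer valuation `ν`, buyers and sellers of valuation `ν` trade
at the same marginal welfare `ν`, so the smaller of their two volumes can be cancelled. -/
lemma IsOptimalAllocation.exists_strictly_separated (hy : IsOptimalAllocation s v B Γ y)
    (hv : ∀ i ∈ s, 0 < v i) (hB : ∀ i ∈ s, 0 ≤ B i) (hΓ : ∀ i ∈ s, 0 ≤ Γ i) :
    ∃ z, IsOptimalAllocation s v B Γ z ∧ ∀ i ∈ s, ∀ j ∈ s, 0 < z i → z j < 0 → v j < v i := by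
  classical
  by_cases hbuyer : ∃ i ∈ s, 0 < y i
  swap
  · push Not at hbuyer
    exact ⟨y, hy, fun i hi _ _ hyi _ => absurd (hbuyer i hi) (not_le.2 hyi)⟩
  obtain ⟨i₀, hi₀, hmin⟩ := exists_min_image {i ∈ s | 0 < y i} v
    (let ⟨i, hi, hyi⟩ := hbuyer; ⟨i, mem_filter.2 ⟨hi, hyi⟩⟩)
  rw [mem_filter] at hi₀
  set ν := v i₀
  set T := {i ∈ s | v i = ν}
  obtain ⟨c, d, hc, hd, hcd, hcd_eq⟩ := exists_one_sub_mul_eq_one_sub_mul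
    (a := ∑ i ∈ T with 0 < y i, y i) (b := -∑ i ∈ T with ¬0 < y i, y i)
    (sum_nonneg fun i hi => (mem_filter.1 hi).2.le)
    (neg_nonneg.2 (sum_nonpos fun i hi => not_lt.1 (mem_filter.1 hi).2))
  set w : ι → ℝ := fun i => if v i = ν then (if 0 < y i then c else d) else 1
  have hw : ∀ i ∈ s, 0 ≤ w i ∧ w i ≤ 1 := fun i _ => by
    simp only [w]; split_ifs <;> first | exact hc | exact hd | norm_num
  have hwν : ∀ i ∈ s, w i ≠ 1 → v i = ν := fun i _ hwi => by
    by_contra hvi; simp [w, hvi] at hwi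
  have hsum : ∑ i ∈ s, w i * y i = 0 := by
    simp only [w, ite_mul, one_mul]
    rw [sum_ite, sum_ite, ← mul_sum, ← mul_sum]
    have hT := sum_filter_add_sum_filter_not T (0 < y ·) y
    have hs := sum_filter_add_sum_filter_not s (v · = ν) y
    linarith [hy.1.1]
  refine ⟨_, hy.shrink hv hB hΓ hw hwν hsum, fun i hi j hj hzi hzj => ?_⟩
  have hyi : 0 < y i := pos_of_mul_pos_right hzi (hw i hi).1
  have hyj : y j < 0 := neg_of_mul_neg_right hzj (hw j hj).1
  have hνi : ν ≤ v i := hmin i (mem_filter.2 ⟨hi, hyi⟩)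
  have hjν : v j ≤ ν := hy.le_of_pos_of_neg hv hB hΓ hi₀.1 hj hi₀.2 hyj
  refine (hjν.trans hνi).lt_of_ne fun hji => ?_
  have hiν : v i = ν := le_antisymm (hji ▸ hjν) hνi
  have hjν' : v j = ν := le_antisymm hjν (hji ▸ hνi)
  simp only [w, hiν, hjν', hyi, not_lt.2 hyj.le, if_true, if_false] at hzi hzj
  rcases hcd with rfl | rfl <;> simp at hzi hzj

lemma exists_pos_threshold (s : Finset ι) {f : ι → ℝ} (hf : ∀ i ∈ s, 0 < f i) (P Q : ι → Prop)
    (hPQ : ∀ i ∈ s, ∀ j ∈ s, P i → Q j → f j < f i) :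
    ∃ t, 0 < t ∧ (∀ i ∈ s, P i → t ≤ f i) ∧ ∀ j ∈ s, Q j → f j < t := by
  classical
  by_cases hP : {i ∈ s | P i}.Nonempty
  · obtain ⟨i₀, hi₀, hmin⟩ := exists_min_image _ f hP
    rw [mem_filter] at hi₀
    exact ⟨f i₀, hf i₀ hi₀.1, fun i hi hPi => hmin i (mem_filter.2 ⟨hi, hPi⟩),
      fun j hj hQj => hPQ i₀ hi₀.1 j hj hi₀.2 hQj⟩
  · have hsum : 0 ≤ ∑ i ∈ s, f i := sum_nonneg fun i hi => (hf i hi).le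
    refine ⟨1 + ∑ i ∈ s, f i, by linarith, fun i hi hPi => absurd ⟨i, mem_filter.2 ⟨hi, hPi⟩⟩ hP,
      fun j hj _ => ?_⟩
    linarith [single_le_sum (fun i hi => (hf i hi).le) hj]

lemma IsOptimalAllocation.exists_price (hy : IsOptimalAllocation s v B Γ y)
    (hv : ∀ i ∈ s, 0 < v i) (hB : ∀ i ∈ s, 0 ≤ B i) (hΓ : ∀ i ∈ s, 0 ≤ Γ i)
    (hsep : ∀ i ∈ s, ∀ j ∈ s, 0 < y i → y j < 0 → v j < v i) :
    ∃ lam, 0 < lam ∧ (∀ i ∈ s, lam * y i ≤ B i) ∧ (∀ i ∈ s, lam ≤ v i → 0 ≤ y i) ∧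
      ∀ j ∈ s, v j < lam → y j ≤ 0 := by
  obtain ⟨lam, hlam, hbuyer, hseller⟩ := exists_pos_threshold s hv (0 < y ·) (y · < 0) hsep
  refine ⟨lam, hlam, fun i hi => ?_,
    fun i hi hvi => not_lt.1 fun hyi => (hseller i hi hyi).not_ge hvi,
    fun j hj hvj => not_lt.1 fun hyj => (hbuyer j hj hyj).not_gt hvj⟩
  rcases lt_or_ge 0 (y i) with hyi | hyi
  · nlinarith [hbuyer i hi hyi, hy.mul_le hv hB hΓ i hi]
  · nlinarith [hB i hi]

end Allocation

section Market

variable {n : ℕ} {v B Γ y : ℕ → ℝ} {lam : ℝ}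

lemma sum_min_eq_sum_min_of_isAllocation (hy : IsAllocation (Icc 1 n) Γ y) (hlam : 0 < lam)
    (hpay : ∀ i ∈ Icc 1 n, lam * y i ≤ B i) (hbuyer : ∀ i ∈ Icc 1 n, lam ≤ v i → 0 ≤ y i)
    (hseller : ∀ j ∈ Icc 1 n, v j < lam → y j ≤ 0) :
    ∑ i ∈ Icc 1 n with lam ≤ v i, min (max (y i) 0) (B i / lam)
      = ∑ j ∈ Icc 1 n with v j < lam, min (max (-y j) 0) (Γ j) := by
  have hbuy : ∀ i ∈ {i ∈ Icc 1 n | lam ≤ v i}, min (max (y i) 0) (B i / lam) = y i := by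
    intro i hi
    obtain ⟨hi, hvi⟩ := mem_filter.1 hi
    rw [max_eq_left (hbuyer i hi hvi), min_eq_left ((le_div_iff₀ hlam).2 ?_)]
    linarith [hpay i hi]
  have hsell : ∀ j ∈ {j ∈ Icc 1 n | v j < lam}, min (max (-y j) 0) (Γ j) = -y j := by
    intro j hj
    obtain ⟨hj, hvj⟩ := mem_filter.1 hj
    rw [max_eq_left (neg_nonneg.2 (hseller j hj hvj)), min_eq_left (by linarith [hy.2 j hj])]
  have hsplit := sum_filter_add_sum_filter_not (Icc 1 n) (lam ≤ v ·) y
  simp only [not_le] at hsplit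
  rw [sum_congr rfl hbuy, sum_congr rfl hsell, sum_neg_distrib]
  linarith [hy.1]

lemma reachable_of_isAllocation (hy : IsAllocation (Icc 1 n) Γ y)
    (hpay : ∀ i ∈ Icc 1 n, lam * y i ≤ B i) (hbuyer : ∀ i ∈ Icc 1 n, lam ≤ v i → 0 ≤ y i) :
    Reachable n v B Γ (fun i => max (-y i) 0) (fun i => max (y i) 0) (fun _ => lam) y
      (fun i => lam * y i) := by
  refine ⟨hy.1, fun i hi => ⟨?_, le_max_left _ _, hy.2 i hi, rfl, hpay i hi⟩,
    Or.inl fun i hi hvi => ?_⟩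
  · linarith [le_max_left (-y i) 0]
  · show lam * y i = min (lam * max (y i) 0) (B i)
    rw [max_eq_left (hbuyer i hi hvi), min_eq_left (hpay i hi)]

/-- Pinning either all buyers or all sellers at their interval ends leaves no freedom, because
the intervals `[min (y i) 0, max (y i) 0]` all point in the direction of `y`. -/
lemma eq_of_reachable (hy : IsAllocation (Icc 1 n) Γ y) (hlam : 0 < lam)
    (hpay : ∀ i ∈ Icc 1 n, lam * y i ≤ B i) (hbuyer : ∀ i ∈ Icc 1 n, lam ≤ v i → 0 ≤ y i)
    (hseller : ∀ j ∈ Icc 1 n, v j < lam → y j ≤ 0) {x p : ℕ → ℝ}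
    (hxp : Reachable n v B Γ (fun i => max (-y i) 0) (fun i => max (y i) 0) (fun _ => lam) x p) :
    ∀ i ∈ Icc 1 n, x i = y i := by
  obtain ⟨hsum, hbox, hbuyers | hsellers⟩ := hxp <;> dsimp only at hbox
  · have hle : ∀ i ∈ Icc 1 n, y i ≤ x i := by
      intro i hi
      obtain ⟨hl, -, -, hp, -⟩ := hbox i hi
      by_cases hvi : lam ≤ v i
      · have hpi : p i = min (lam * max (y i) 0) (B i) := hbuyers i hi hvi
        rw [hp, max_eq_left (hbuyer i hi hvi), min_eq_left (hpay i hi)] at hpi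
        exact (mul_left_cancel₀ hlam.ne' hpi).ge
      · rw [max_eq_left (neg_nonneg.2 (hseller i hi (not_le.1 hvi))), neg_neg] at hl
        exact hl
    exact fun i hi => ((sum_eq_sum_iff_of_le hle).1 (hy.1.trans hsum.symm) i hi).symm
  · have hle : ∀ i ∈ Icc 1 n, x i ≤ y i := by
      intro i hi
      obtain ⟨-, hr, -, -, -⟩ := hbox i hi
      by_cases hvi : v i < lam
      · have hxi : x i = -min (max (-y i) 0) (Γ i) := hsellers i hi hvi
        rw [max_eq_left (neg_nonneg.2 (hseller i hi hvi)), min_eq_left (by linarith [hy.2 i hi]),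
          neg_neg] at hxi
        exact hxi.le
      · rwa [max_eq_left (hbuyer i hi (not_lt.1 hvi))] at hr
    exact (sum_eq_sum_iff_of_le hle).1 (hsum.trans hy.1.symm)

end Market

/-- Market Optimal Price: for any agent set there exist intervals `[−l*_i, r*_i]`
and a single uniform price `λ*` such that supply and demand balance, a reachable
state exists, and every reachable state achieves the optimal market liquid
welfare `OPT`. -/
theorem stmt_17 (n : ℕ) (v B Γ : ℕ → ℝ)
    (hv : ∀ i ∈ Icc 1 n, 0 < v i)
    (hB : ∀ i ∈ Icc 1 n, 0 ≤ B i) (hΓ : ∀ i ∈ Icc 1 n, 0 ≤ Γ i)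
    (OPT : ℝ)
    (hOPT : IsGreatest {w : ℝ | ∃ y : ℕ → ℝ,
      (∑ i ∈ Icc 1 n, y i = 0) ∧ (∀ i ∈ Icc 1 n, -Γ i ≤ y i) ∧
      w = ∑ i ∈ Icc 1 n, (v i * Γ i + min (v i * y i) (B i))} OPT) :
    ∃ (l r : ℕ → ℝ) (lam : ℝ),
      (∀ i ∈ Icc 1 n, 0 ≤ l i ∧ 0 ≤ r i) ∧ 0 < lam ∧
      (∑ i ∈ (Icc 1 n).filter (fun i => lam ≤ v i), min (r i) (B i / lam)
        = ∑ j ∈ (Icc 1 n).filter (fun j => v j < lam), min (l j) (Γ j)) ∧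
      (∃ x p : ℕ → ℝ, Reachable n v B Γ l r (fun _ => lam) x p) ∧
      (∀ x p : ℕ → ℝ, Reachable n v B Γ l r (fun _ => lam) x p →
        ∑ i ∈ Icc 1 n, (v i * Γ i + min (v i * x i) (B i)) = OPT) := by
  obtain ⟨y₀, hy₀, rfl⟩ := exists_isOptimalAllocation_of_isGreatest hOPT
  obtain ⟨y, hy, hsep⟩ := hy₀.exists_strictly_separated hv hB hΓ
  obtain ⟨lam, hlam, hpay, hbuyer, hseller⟩ := hy.exists_price hv hB hΓ hsep
  refine ⟨fun i => max (-y i) 0, fun i => max (y i) 0, lam,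
    fun _ _ => ⟨le_max_right _ _, le_max_right _ _⟩, hlam,
    sum_min_eq_sum_min_of_isAllocation hy.1 hlam hpay hbuyer hseller,
    ⟨y, _, reachable_of_isAllocation hy.1 hpay hbuyer⟩, fun x p hxp => ?_⟩
  rw [hy₀.liquidWelfare_eq hy]
  exact sum_congr rfl fun i hi => by
    rw [eq_of_reachable hy.1 hlam hpay hbuyer hseller hxp i hi]
end
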